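/- arXiv:0809.0401 — 8 statements merged into one kernel-verified Lean document; each statement's English description precedes it below -/
import Mathlib

section
/- Let f, g ∈ ℝ[z₁,…,zₙ]. Every non-zero polynomial in the real span {αf + βg : α, β ∈ ℝ} is stable if and only if either f = g ≡ 0, or f ≪ g, or g ≪ f. Moreover, if g ≪ f then Wⱼ[g,f](x) ≤ 0 for all x ∈ ℝⁿ and all 1 ≤ j ≤ n, and if f ≪ g then Wⱼ[g,f](x) ≥ 0 for all x ∈ ℝⁿ and all 1 ≤ j ≤ n. -/
open MvPolynomial

/-- A complex polynomial is *stable* if it is non-vanishing whenever all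
variables lie in the open upper half-plane. -/
def IsStable {σ : Type*} (f : MvPolynomial σ ℂ) : Prop :=
  ∀ z : σ → ℂ, (∀ i, 0 < (z i).im) → MvPolynomial.eval z f ≠ 0

/-- A real polynomial is *real stable* if it is non-vanishing whenever all
variables lie in the open upper half-plane. -/
def IsRealStable {σ : Type*} (f : MvPolynomial σ ℝ) : Prop :=
  ∀ z : σ → ℂ, (∀ i, 0 < (z i).im) → MvPolynomial.aeval z f ≠ 0

/-- `ProperPosition f g` means `f ≪ g`, i.e. `g + i·f` is stable. -/
def ProperPosition {σ : Type*} (f g : MvPolynomial σ ℝ) : Prop :=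
  IsStable (MvPolynomial.map (algebraMap ℝ ℂ) g +
    Complex.I • MvPolynomial.map (algebraMap ℝ ℂ) f)

/-- The `j`-th Wronskian `W_j[g,f] = (∂g/∂z_j)·f − g·(∂f/∂z_j)`. -/
noncomputable def wronskian' {σ : Type*} (j : σ) (g f : MvPolynomial σ ℝ) :
    MvPolynomial σ ℝ :=
  pderiv j g * f - g * pderiv j f

/-!
Write `S = g + i f` and `S* = g - i f`, so that `f ≪ g` says that `S` has no zero in the upper
half-space. Restricted to a line `x + t y` with `x, y` real and `y > 0`, `S` becomes a polynomial in
`t` whose roots lie in the closed lower half-plane; its factorisation into linear factors gives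
`‖S(z̄)‖ ≤ ‖S(z)‖` on the upper half-space and, at real points, `Im (∂ⱼS · S̄) ≤ 0`, which is
`Wⱼ[g,f] ≥ 0`.

Since `2 (a f + b g) = μ S + μ̄ S*` with `μ = b - i a`, a zero of `a f + b g` in the upper
half-space is a point where the holomorphic quotient `S*/S`, of modulus at most `1`, has modulus
`1`. By the maximum modulus principle `S*/S` is then constant, and `a f + b g` vanishes on the
whole upper half-space, hence is zero.

Conversely, if every nonzero combination is stable and `f, g` are independent, then `Im (g/f)`
never vanishes on the connected upper half-space, so it has a constant sign: this is `f ≪ g` or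
`g ≪ f`.
-/

open ComplexConjugate Filter Topology

theorem Complex.norm_conj_sub_le {w r : ℂ} (hw : 0 ≤ w.im) (hr : r.im ≤ 0) :
    ‖conj w - r‖ ≤ ‖w - r‖ := by
  rw [← sq_le_sq₀ (norm_nonneg _) (norm_nonneg _), Complex.sq_norm, Complex.sq_norm,
    Complex.normSq_apply, Complex.normSq_apply]
  simp only [Complex.sub_re, Complex.sub_im, Complex.conj_re, Complex.conj_im]
  nlinarith [mul_nonpos_of_nonneg_of_nonpos hw hr]

namespace Polynomial

theorem stable_induction {P : ℂ[X] → Prop} (C_mem : ∀ c, P (C c))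
    (X_sub_C_mul : ∀ r u, r.im ≤ 0 → P u → P ((X - C r) * u)) {s : ℂ[X]}
    (hs : ∀ w : ℂ, 0 < w.im → s.eval w ≠ 0) : P s := by
  have hroots : ∀ r ∈ s.roots, r.im ≤ 0 := fun r hr =>
    not_lt.1 fun h => hs r h (mem_roots'.1 hr).2
  rw [← C_leadingCoeff_mul_prod_multiset_X_sub_C (IsAlgClosed.card_roots_eq_natDegree (p := s))]
  generalize s.roots = m at hroots ⊢
  induction m using Multiset.induction_on with
  | empty => simpa using C_mem _
  | cons r m ih =>
    rw [Multiset.map_cons, Multiset.prod_cons, mul_left_comm]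
    exact X_sub_C_mul r _ (hroots r (Multiset.mem_cons_self r m))
      (ih fun r' hr' => hroots r' (Multiset.mem_cons_of_mem hr'))

theorem norm_eval_conj_le {s : ℂ[X]} (hs : ∀ w : ℂ, 0 < w.im → s.eval w ≠ 0) {w : ℂ}
    (hw : 0 ≤ w.im) : ‖s.eval (conj w)‖ ≤ ‖s.eval w‖ := by
  refine stable_induction (P := fun s => ‖s.eval (conj w)‖ ≤ ‖s.eval w‖)
    (fun c => by simp) (fun r u hr hu => ?_) hs
  simp only [eval_mul, eval_sub, eval_X, eval_C, norm_mul]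
  exact mul_le_mul (Complex.norm_conj_sub_le hw hr) hu (norm_nonneg _) (norm_nonneg _)

theorem im_eval_derivative_mul_conj_nonpos {s : ℂ[X]}
    (hs : ∀ w : ℂ, 0 < w.im → s.eval w ≠ 0) (τ : ℝ) :
    ((derivative s).eval (τ : ℂ) * conj (s.eval (τ : ℂ))).im ≤ 0 := by
  refine stable_induction
    (P := fun s => ((derivative s).eval (τ : ℂ) * conj (s.eval (τ : ℂ))).im ≤ 0)
    (fun c => by simp) (fun r u hr hu => ?_) hs
  set A := u.eval (τ : ℂ)
  set B := (derivative u).eval (τ : ℂ)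
  have key : (derivative ((X - C r) * u)).eval (τ : ℂ) * conj (((X - C r) * u).eval (τ : ℂ)) =
      Complex.normSq A * conj ((τ : ℂ) - r) + Complex.normSq ((τ : ℂ) - r) * (B * conj A) := by
    simp only [derivative_mul, derivative_sub, derivative_X, derivative_C, sub_zero, one_mul,
      eval_add, eval_mul, eval_sub, eval_X, eval_C, map_mul, Complex.normSq_eq_conj_mul_self]
    ring
  rw [key]
  simp only [Complex.add_im, Complex.im_ofReal_mul, Complex.conj_im,
    Complex.sub_im, Complex.ofReal_im]
  nlinarith [Complex.normSq_nonneg A, Complex.normSq_nonneg ((τ : ℂ) - r)]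

end Polynomial

namespace MvPolynomial

variable {σ : Type*}

theorem eval_map_algebraMap {R A : Type*} [CommSemiring R] [CommSemiring A] [Algebra R A]
    (z : σ → A) (p : MvPolynomial σ R) : eval z (map (algebraMap R A) p) = aeval z p := by
  rw [aeval_def, eval₂_eq_eval_map]

theorem aeval_star (z : σ → ℂ) (p : MvPolynomial σ ℝ) : aeval (star z) p = conj (aeval z p) := by
  induction p using MvPolynomial.induction_on with
  | C a => simp only [aeval_C, Complex.coe_algebraMap, Complex.conj_ofReal]
  | add p q hp hq => simp only [map_add, hp, hq]
  | mul_X p i hp => simp only [map_mul, aeval_X, hp, Pi.star_apply, Complex.star_def]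

theorem aeval_ofReal (x : σ → ℝ) (p : MvPolynomial σ ℝ) :
    aeval (fun k => (x k : ℂ)) p = eval x p := by
  induction p using MvPolynomial.induction_on with
  | C a => simp
  | add p q hp hq => simp [hp, hq]
  | mul_X p i hp => simp [hp]

theorem analyticAt_aeval [Fintype σ] (p : MvPolynomial σ ℝ) (z : σ → ℂ) :
    AnalyticAt ℂ (fun w : σ → ℂ => aeval w p) z :=
  .aeval_mvPolynomial
    (fun i => (ContinuousLinearMap.proj (R := ℂ) (φ := fun _ : σ => ℂ) i).analyticAt z) p

noncomputable def restrictLine (S : MvPolynomial σ ℂ) (x y : σ → ℝ) : Polynomial ℂ :=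
  aeval (fun k => Polynomial.C (x k : ℂ) + Polynomial.C (y k : ℂ) * Polynomial.X) S

theorem eval_restrictLine (S : MvPolynomial σ ℂ) (x y : σ → ℝ) (t : ℂ) :
    (restrictLine S x y).eval t = eval (fun k => x k + y k * t) S := by
  induction S using MvPolynomial.induction_on with
  | C a => simp [restrictLine]
  | add p q hp hq => simp only [restrictLine, map_add, Polynomial.eval_add] at *; rw [hp, hq]
  | mul_X p i hp =>
    simp only [restrictLine, map_mul, aeval_X, eval_X, Polynomial.eval_mul] at *
    rw [hp]
    simp

theorem derivative_restrictLine [Fintype σ] (S : MvPolynomial σ ℂ) (x y : σ → ℝ) :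
    Polynomial.derivative (restrictLine S x y) =
      restrictLine (∑ k, (y k : ℂ) • pderiv k S) x y := by
  classical
  induction S using MvPolynomial.induction_on with
  | C a => simp [restrictLine]
  | add p q hp hq => simp_all [restrictLine, Finset.sum_add_distrib]
  | mul_X p i hp =>
    simp only [restrictLine] at hp ⊢
    simp only [map_mul, aeval_X, Polynomial.derivative_mul, hp, pderiv_mul, map_add, map_sum,
      map_smul, smul_add, Finset.sum_add_distrib, Finset.sum_mul, smul_mul_assoc,
      Polynomial.derivative_C, Polynomial.derivative_X, zero_mul, zero_add, mul_one]
    congr 1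
    simp only [pderiv_X, Pi.single_apply, apply_ite, map_one, map_zero, mul_one, mul_zero,
      smul_zero, Finset.sum_ite_eq, Finset.mem_univ, if_true]
    rw [Polynomial.smul_eq_C_mul, mul_comm]

end MvPolynomial

def upperHalfSpace (σ : Type*) : Set (σ → ℂ) := {z | ∀ i, 0 < (z i).im}

section UpperHalfSpace

variable {σ : Type*}

theorem upperHalfSpace_eq_pi : upperHalfSpace σ = Set.univ.pi fun _ => {w : ℂ | 0 < w.im} := by
  ext z
  simp [upperHalfSpace]

theorem isOpen_upperHalfSpace [Finite σ] : IsOpen (upperHalfSpace σ) := by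
  rw [upperHalfSpace_eq_pi]
  exact isOpen_set_pi Set.finite_univ fun _ _ => isOpen_lt continuous_const Complex.continuous_im

theorem isPreconnected_upperHalfSpace : IsPreconnected (upperHalfSpace σ) := by
  rw [upperHalfSpace_eq_pi]
  exact (convex_pi fun _ _ => convex_halfSpace_im_gt 0).isPreconnected

theorem MvPolynomial.eq_zero_of_aeval_upperHalfSpace {p : MvPolynomial σ ℝ}
    (h : ∀ z ∈ upperHalfSpace σ, aeval z p = 0) : p = 0 := by
  have hinf : {w : ℂ | 0 < w.im}.Infinite :=
    infinite_of_mem_nhds Complex.I <|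
      (isOpen_lt continuous_const Complex.continuous_im).mem_nhds (by simp)
  refine map_injective (algebraMap ℝ ℂ) (RingHom.injective _) ?_
  rw [map_zero]
  refine funext_set (fun _ => {w : ℂ | 0 < w.im}) (fun _ => hinf) fun z hz => ?_
  rw [eval_map_algebraMap, map_zero, h z (upperHalfSpace_eq_pi ▸ hz)]

end UpperHalfSpace

namespace IsStable

variable {σ : Type*} {S : MvPolynomial σ ℂ}

theorem eval_restrictLine_ne_zero (hS : IsStable S) (x : σ → ℝ) {y : σ → ℝ} (hy : ∀ k, 0 < y k)
    (t : ℂ) (ht : 0 < t.im) : (restrictLine S x y).eval t ≠ 0 := by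
  rw [eval_restrictLine]
  exact hS _ fun k => by simpa using mul_pos (hy k) ht

theorem norm_eval_star_le (hS : IsStable S) {z : σ → ℂ} (hz : z ∈ upperHalfSpace σ) :
    ‖eval (star z) S‖ ≤ ‖eval z S‖ := by
  -- on the line through `Re z` in direction `Im z`, the points `z` and `z̄` are `t = ±i`
  have hline := Polynomial.norm_eval_conj_le
    (hS.eval_restrictLine_ne_zero (fun k => (z k).re) hz) (w := Complex.I) (by simp)
  rw [eval_restrictLine, eval_restrictLine, Complex.conj_I] at hline
  convert hline using 4 <;> funext k <;> apply Complex.ext <;> simp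

theorem sum_mul_im_pderiv_nonpos [Fintype σ] (hS : IsStable S) (x : σ → ℝ)
    {y : σ → ℝ} (hy : ∀ k, 0 < y k) :
    ∑ k, y k * (eval (fun i => (x i : ℂ)) (pderiv k S) * conj (eval (fun i => (x i : ℂ)) S)).im
      ≤ 0 := by
  have h := Polynomial.im_eval_derivative_mul_conj_nonpos (hS.eval_restrictLine_ne_zero x hy) 0
  rw [derivative_restrictLine, eval_restrictLine, eval_restrictLine] at h
  simpa [Finset.sum_mul, -Complex.coe_smul, smul_eval, mul_add, mul_assoc] using h

theorem im_eval_pderiv_mul_conj_nonpos [Fintype σ] (hS : IsStable S) (x : σ → ℝ) (j : σ) :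
    (eval (fun i => (x i : ℂ)) (pderiv j S) * conj (eval (fun i => (x i : ℂ)) S)).im ≤ 0 := by
  classical
  set c : σ → ℝ := fun k =>
    (eval (fun i => (x i : ℂ)) (pderiv k S) * conj (eval (fun i => (x i : ℂ)) S)).im
  -- take the directions `eⱼ + ε` and let `ε → 0`
  have hcont : Continuous fun ε : ℝ => ∑ k, ((if k = j then 1 else 0) + ε) * c k := by fun_prop
  have hlim : Tendsto (fun ε : ℝ => ∑ k, ((if k = j then 1 else 0) + ε) * c k) (𝓝[>] 0)
      (𝓝 (c j)) := by
    simpa [add_mul, Finset.sum_add_distrib] using (hcont.tendsto 0).mono_left nhdsWithin_le_nhds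
  refine le_of_tendsto hlim ?_
  filter_upwards [self_mem_nhdsWithin] with ε (hε : 0 < ε)
  exact hS.sum_mul_im_pderiv_nonpos x fun k => by split_ifs <;> linarith

end IsStable

section ProperPosition

open Complex (I)

variable {σ : Type*} {f g : MvPolynomial σ ℝ}

theorem eval_map_add_I_smul_map (f g : MvPolynomial σ ℝ) (z : σ → ℂ) :
    eval z (map (algebraMap ℝ ℂ) g + I • map (algebraMap ℝ ℂ) f) =
      aeval z g + I * aeval z f := by
  rw [map_add, smul_eval, eval_map_algebraMap, eval_map_algebraMap]

theorem properPosition_iff :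
    ProperPosition f g ↔ ∀ z ∈ upperHalfSpace σ, aeval z g + I * aeval z f ≠ 0 := by
  simp only [ProperPosition, IsStable, eval_map_add_I_smul_map]
  rfl

theorem properPosition_zero_left (hg : IsRealStable g) : ProperPosition 0 g :=
  properPosition_iff.2 fun z hz => by simpa using hg z hz

theorem IsRealStable.properPosition_smul (hf : IsRealStable f) (c : ℝ) :
    ProperPosition f (c • f) :=
  properPosition_iff.2 fun z hz h => by
    rw [map_smul, Complex.real_smul, ← add_mul] at h
    rcases mul_eq_zero.1 h with h | h
    · simpa using congrArg Complex.im h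
    · exact hf z hz h

theorem properPosition_or_of_im_div_ne_zero [Fintype σ] (hf : IsRealStable f)
    (him : ∀ z ∈ upperHalfSpace σ, (aeval z g / aeval z f).im ≠ 0) :
    ProperPosition f g ∨ ProperPosition g f := by
  by_contra! hcon
  simp only [properPosition_iff, not_forall, not_not] at hcon
  obtain ⟨⟨z₁, hz₁, h₁⟩, ⟨z₂, hz₂, h₂⟩⟩ := hcon
  have e₁ : (aeval z₁ g / aeval z₁ f).im = -1 := by
    rw [eq_neg_of_add_eq_zero_left h₁, neg_div, mul_div_assoc, div_self (hf z₁ hz₁)]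
    simp
  have e₂ : (aeval z₂ g / aeval z₂ f).im = 1 := by
    have hg : aeval z₂ g ≠ 0 := fun hg => hf z₂ hz₂ (by simpa [hg] using h₂)
    rw [eq_neg_of_add_eq_zero_left h₂, div_neg, div_mul_cancel_right₀ hg]
    simp
  have hcont : ContinuousOn (fun z => (aeval z g / aeval z f).im) (upperHalfSpace σ) :=
    fun z hz => (Complex.continuous_im.continuousAt.comp
      ((analyticAt_aeval g z).continuousAt.div (analyticAt_aeval f z).continuousAt
        (hf z hz))).continuousWithinAt
  obtain ⟨z, hz, hz0⟩ := isPreconnected_upperHalfSpace.intermediate_value hz₁ hz₂ hcont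
    (show (0 : ℝ) ∈ Set.Icc _ _ by rw [e₁, e₂]; norm_num)
  exact him z hz hz0

theorem properPosition_or_of_forall_isRealStable [Fintype σ]
    (H : ∀ a b : ℝ, a • f + b • g ≠ 0 → IsRealStable (a • f + b • g)) :
    (f = 0 ∧ g = 0) ∨ ProperPosition f g ∨ ProperPosition g f := by
  by_cases hf : f = 0
  · subst hf
    by_cases hg : g = 0
    · exact .inl ⟨rfl, hg⟩
    · exact .inr (.inl (properPosition_zero_left (by simpa using H 0 1 (by simpa using hg))))
  have hfs : IsRealStable f := by simpa using H 1 0 (by simpa using hf)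
  by_cases hdep : ∃ c : ℝ, g = c • f
  · obtain ⟨c, rfl⟩ := hdep
    exact .inr (.inl (hfs.properPosition_smul c))
  refine .inr (properPosition_or_of_im_div_ne_zero hfs fun z hz him => ?_)
  -- a real value `c` of `g/f` at `z` makes `g - c f` a nonzero combination vanishing at `z`
  set c := (aeval z g / aeval z f).re
  have hgc : aeval z g = c * aeval z f := by
    rw [← div_eq_iff (hfs z hz)]
    exact Complex.ext (by simp [c]) (by simpa using him)
  refine H (-c) 1 (fun h0 => hdep ⟨c, ?_⟩) z hz ?_
  · rwa [neg_smul, one_smul, neg_add_eq_sub, sub_eq_zero] at h0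
  · simp [hgc]

theorem neg_wronskian' (j : σ) (f g : MvPolynomial σ ℝ) : -wronskian' j g f = wronskian' j f g := by
  simp only [wronskian']
  ring

namespace ProperPosition

theorem norm_sub_le (h : ProperPosition f g) {z : σ → ℂ} (hz : z ∈ upperHalfSpace σ) :
    ‖aeval z g - I * aeval z f‖ ≤ ‖aeval z g + I * aeval z f‖ := by
  have hstar := IsStable.norm_eval_star_le h hz
  rw [eval_map_add_I_smul_map, eval_map_add_I_smul_map, aeval_star, aeval_star] at hstar
  rwa [← Complex.norm_conj, map_sub, map_mul, Complex.conj_I, neg_mul, sub_neg_eq_add]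

theorem exists_eq_mul_of_norm_eq [Fintype σ] (h : ProperPosition f g) {z₀ : σ → ℂ}
    (hz₀ : z₀ ∈ upperHalfSpace σ)
    (heq : ‖aeval z₀ g - I * aeval z₀ f‖ = ‖aeval z₀ g + I * aeval z₀ f‖) :
    ∃ κ : ℂ, ∀ z ∈ upperHalfSpace σ,
      aeval z g - I * aeval z f = κ * (aeval z g + I * aeval z f) := by
  have hS := properPosition_iff.1 h
  set q : (σ → ℂ) → ℂ := fun z => (aeval z g - I * aeval z f) / (aeval z g + I * aeval z f)
  have hq : DifferentiableOn ℂ q (upperHalfSpace σ) := fun z hz =>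
    (((analyticAt_aeval g z).sub (analyticAt_const.mul (analyticAt_aeval f z))).div
      ((analyticAt_aeval g z).add (analyticAt_const.mul (analyticAt_aeval f z)))
      (hS z hz)).differentiableAt.differentiableWithinAt
  have hmax : IsMaxOn (norm ∘ q) (upperHalfSpace σ) z₀ := fun z hz => by
    simp only [Function.comp_apply, q, norm_div, heq,
      div_self (norm_ne_zero_iff.2 (hS z₀ hz₀))]
    exact (div_le_one (norm_pos_iff.2 (hS z hz))).2 (h.norm_sub_le hz)
  refine ⟨q z₀, fun z hz => ?_⟩
  have hconst := Complex.eqOn_of_isPreconnected_of_isMaxOn_norm isPreconnected_upperHalfSpace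
    isOpen_upperHalfSpace hq hz₀ hmax hz
  rw [Function.const_apply] at hconst
  rw [← hconst, div_mul_cancel₀ _ (hS z hz)]

theorem isRealStable_smul_add_smul [Fintype σ] (h : ProperPosition f g) {a b : ℝ}
    (hab : a • f + b • g ≠ 0) : IsRealStable (a • f + b • g) := by
  intro z₀ hz₀ hzero
  set S : (σ → ℂ) → ℂ := fun z => aeval z g + I * aeval z f
  set T : (σ → ℂ) → ℂ := fun z => aeval z g - I * aeval z f
  set μ : ℂ := b - a * I
  have hcomb : ∀ z, 2 * aeval z (a • f + b • g) = μ * S z + conj μ * T z := fun z => by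
    simp only [S, T, μ, map_add, map_smul, Complex.real_smul, map_sub, map_mul, Complex.conj_ofReal,
      Complex.conj_I]
    linear_combination (2 * (a : ℂ) * aeval z f) * Complex.I_sq
  have hμ : μ ≠ 0 := fun hμ => hab <| by
    have ha : a = 0 := by simpa [μ] using congrArg Complex.im hμ
    have hb : b = 0 := by simpa [μ] using congrArg Complex.re hμ
    simp [ha, hb]
  have hS₀ : S z₀ ≠ 0 := properPosition_iff.1 h z₀ hz₀
  have hμST : μ * S z₀ = -(conj μ * T z₀) := by
    linear_combination (hcomb z₀).symm.trans (by rw [hzero, mul_zero])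
  have hnorm : ‖T z₀‖ = ‖S z₀‖ := by
    have := congrArg norm hμST
    rw [norm_neg, norm_mul, norm_mul, Complex.norm_conj] at this
    exact (mul_left_cancel₀ (norm_ne_zero_iff.2 hμ) this).symm
  obtain ⟨κ, hκ⟩ := h.exists_eq_mul_of_norm_eq hz₀ hnorm
  have hcoef : μ + conj μ * κ = 0 := by
    refine (mul_eq_zero.1 ?_).resolve_right hS₀
    linear_combination hμST - conj μ * hκ z₀ hz₀
  refine hab (MvPolynomial.eq_zero_of_aeval_upperHalfSpace fun z hz => ?_)
  linear_combination (hcomb z + conj μ * hκ z hz + S z * hcoef) / 2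

theorem eval_wronskian'_nonneg [Fintype σ] (h : ProperPosition f g) (x : σ → ℝ)
    (j : σ) : 0 ≤ eval x (wronskian' j g f) := by
  have hw := IsStable.im_eval_pderiv_mul_conj_nonpos h x j
  rw [map_add, Derivation.map_smul, pderiv_map, pderiv_map, eval_map_add_I_smul_map,
    eval_map_add_I_smul_map] at hw
  have him (p q p₁ q₁ : ℝ) :
      (((q₁ : ℂ) + I * p₁) * conj ((q : ℂ) + I * p)).im = p₁ * q - q₁ * p := by
    simp [Complex.mul_im]
    ring
  rw [aeval_ofReal, aeval_ofReal, aeval_ofReal, aeval_ofReal, him] at hw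
  rw [wronskian', map_sub, map_mul, map_mul]
  linarith

end ProperPosition

end ProperPosition

/-- Multivariate Hermite–Kakeya–Obreschkoff theorem: all non-zero polynomials
in the real span of `f` and `g` are stable if and only if `f = g = 0`, or
`f ≪ g`, or `g ≪ f`.  Moreover, if `g ≪ f` then `W_j[g,f] ≤ 0` on `ℝⁿ` for all
`j`, and if `f ≪ g` then `W_j[g,f] ≥ 0` on `ℝⁿ` for all `j`. -/
theorem hermite_kakeya_obreschkoff (n : ℕ) (f g : MvPolynomial (Fin n) ℝ) :
    ((∀ a b : ℝ, a • f + b • g ≠ 0 → IsRealStable (a • f + b • g)) ↔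
      ((f = 0 ∧ g = 0) ∨ ProperPosition f g ∨ ProperPosition g f)) ∧
    (ProperPosition g f → ∀ x : Fin n → ℝ, ∀ j : Fin n,
        MvPolynomial.eval x (wronskian' j g f) ≤ 0) ∧
    (ProperPosition f g → ∀ x : Fin n → ℝ, ∀ j : Fin n,
        0 ≤ MvPolynomial.eval x (wronskian' j g f)) := by
  refine ⟨⟨properPosition_or_of_forall_isRealStable, ?_⟩,
    fun h x j => ?_, fun h x j => h.eval_wronskian'_nonneg x j⟩
  · rintro (⟨rfl, rfl⟩ | h | h) a b hab
    · simp at hab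
    · exact h.isRealStable_smul_add_smul hab
    · rw [add_comm] at hab ⊢
      exact h.isRealStable_smul_add_smul hab
  · rw [← neg_nonneg, ← map_neg, neg_wronskian']
    exact h.eval_wronskian'_nonneg x j
end

section
/- Let f, g ∈ ℝ[z₁,…,zₙ] be non-zero polynomials that are not real constant multiples of each other, and set h = f + i·g. Then the following are equivalent: (1) h is stable (i.e., g ≪ f); (2) |h(z)| > |h(z̄)| for all z = (z₁,…,zₙ) ∈ ℂⁿ with Im(zⱼ) > 0 for all j, where z̄ = (z̄₁,…,z̄ₙ); (3) the polynomial f + z_{n+1}·g in n+1 variables is real stable; (4) f and g are real stable and Im(f(z)/g(z)) ≥ 0 whenever Im(zⱼ) > 0 for all 1 ≤ j ≤ n; (5) g(λt+α) ≪ f(λt+α) as univariate polynomials in t, for all λ ∈ ℝ₊ⁿ and α ∈ ℝⁿ. -/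
/-!
Restricting `h = f + i g` to a line `t ↦ λ t + α` with `λ > 0` gives a univariate polynomial
whose roots lie in the closed lower half-plane; since `|t̄ - r| ≤ |t - r|` for each such root `r`
and `Im t > 0`, this yields `|h(z̄)| ≤ |h(z)|` on the upper orthant. If equality held at one
point, the holomorphic function `(f - i g) / (f + i g)`, whose modulus is `|h(z̄)| / |h(z)|`,
would attain its maximum modulus on the connected orthant and hence be a constant `ω`; comparing
coefficients in `f - i g = ω (f + i g)` makes `f` and `g` proportional. The strict inequality
`|f - i g| < |f + i g|` says `Im (f ḡ) > 0`, which gives (3) and (4), and (5) is stability read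
along lines.
-/

open MvPolynomial

/-- Restriction of a real polynomial in `n` variables to the real line
`t ↦ λ·t + α`, yielding a univariate real polynomial. -/
noncomputable def lineRestrict {n : ℕ} (f : MvPolynomial (Fin n) ℝ)
    (lam a : Fin n → ℝ) : Polynomial ℝ :=
  MvPolynomial.aeval (fun i => Polynomial.C (lam i) * Polynomial.X + Polynomial.C (a i)) f

open ComplexConjugate

namespace Complex

lemma ofReal_im_mul_I_add_ofReal_re (z : ℂ) : (z.im : ℂ) * I + z.re = z := by
  rw [add_comm]
  exact re_add_im z

lemma norm_conj_sub_le_norm_sub {t r : ℂ} (ht : 0 < t.im) (hr : r.im ≤ 0) :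
    ‖conj t - r‖ ≤ ‖t - r‖ := by
  rw [norm_def, norm_def]
  gcongr
  simp only [normSq_apply, sub_re, sub_im, conj_re, conj_im]
  nlinarith

lemma normSq_add_I_mul_sub_normSq_sub_I_mul (F G : ℂ) :
    normSq (F + I * G) - normSq (F - I * G) = 4 * (F * conj G).im := by
  simp only [normSq_apply, add_re, add_im, sub_re, sub_im, mul_re, mul_im, I_re, I_im, conj_re,
    conj_im]
  ring

lemma norm_sub_I_mul_lt_norm_add_I_mul_iff {F G : ℂ} :
    ‖F - I * G‖ < ‖F + I * G‖ ↔ 0 < (F * conj G).im := by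
  rw [← sq_lt_sq₀ (norm_nonneg _) (norm_nonneg _), Complex.sq_norm, Complex.sq_norm,
    ← sub_pos, normSq_add_I_mul_sub_normSq_sub_I_mul]
  constructor <;> intro h <;> linarith

lemma im_div_eq_im_mul_conj_div (F G : ℂ) : (F / G).im = (F * conj G).im / normSq G := by
  simp only [div_im, mul_im, conj_re, conj_im]
  ring

lemma im_mul_conj_neg_of_add_mul_eq_zero {F G w : ℂ} (hG : G ≠ 0) (hw : 0 < w.im)
    (h : F + w * G = 0) : (F * conj G).im < 0 := by
  rw [show F = -w * G by linear_combination h, mul_assoc, mul_conj, neg_mul, neg_im,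
    im_mul_ofReal, neg_neg_iff_pos]
  exact mul_pos hw (normSq_pos.2 hG)

lemma add_mul_ne_zero_of_im_mul_conj_pos {F G w : ℂ} (h : 0 < (F * conj G).im)
    (hw : 0 < w.im) : F + w * G ≠ 0 := fun h0 =>
  h.not_gt (im_mul_conj_neg_of_add_mul_eq_zero (fun hG => by simp [hG] at h) hw h0)

lemma add_I_mul_ne_zero_of_im_div_nonneg {F G : ℂ} (hG : G ≠ 0) (h : 0 ≤ (F / G).im) :
    F + I * G ≠ 0 := fun h0 => by
  rw [im_div_eq_im_mul_conj_div] at h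
  exact h.not_gt (div_neg_of_neg_of_pos (im_mul_conj_neg_of_add_mul_eq_zero hG (by simp) h0)
    (normSq_pos.2 hG))

lemma im_mul_conj_eq_zero_of_conj_eq_mul {u v ω : ℂ} (hu : conj u = ω * u)
    (hv : conj v = ω * v) : (u * conj v).im = 0 := by
  rw [← conj_eq_iff_im, map_mul, conj_conj, hu, hv]
  ring

end Complex

lemma Polynomial.norm_eval_conj_le_norm_eval {P : Polynomial ℂ}
    (hP : ∀ t : ℂ, 0 < t.im → P.eval t ≠ 0) {t : ℂ} (ht : 0 < t.im) :
    ‖P.eval (conj t)‖ ≤ ‖P.eval t‖ := by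
  have hroots : ∀ r ∈ P.roots, r.im ≤ 0 := fun r hr =>
    not_lt.1 fun h => hP r h (Polynomial.isRoot_of_mem_roots hr)
  have norm_prod : ∀ m : Multiset ℂ, ‖m.prod‖ = (m.map (‖·‖)).prod :=
    map_multiset_prod (normHom : ℂ →*₀ ℝ)
  simp only [(IsAlgClosed.splits P).eval_eq_prod_roots, norm_mul, norm_prod, Multiset.map_map,
    Function.comp_def]
  gcongr
  exact Multiset.prod_map_le_prod_map₀ _ _ (fun _ _ => norm_nonneg _)
    fun r hr => Complex.norm_conj_sub_le_norm_sub ht (hroots r hr)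

namespace MvPolynomial

variable {σ : Type*}

lemma eval_map_conj (H : MvPolynomial σ ℂ) (z : σ → ℂ) :
    eval z (map conj H) = conj (eval (fun j => conj (z j)) H) := by
  rw [eval_map, eval, coe_eval₂Hom, eval₂_comp_left]
  simp [Function.comp_def]

lemma aeval_conj (f : MvPolynomial σ ℝ) (z : σ → ℂ) :
    aeval (fun j => conj (z j)) f = conj (aeval z f) :=
  (comp_aeval_apply (f := z) Complex.conjAe.toAlgHom f).symm

lemma eval_map_add_I_smul (f g : MvPolynomial σ ℝ) (z : σ → ℂ) :
    eval z (map (algebraMap ℝ ℂ) f + Complex.I • map (algebraMap ℝ ℂ) g) =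
      aeval z f + Complex.I * aeval z g := by
  rw [map_add, smul_eval, eval_map, eval_map, ← aeval_def, ← aeval_def]

lemma norm_eval_conj_map_add_I_smul (f g : MvPolynomial σ ℝ) (z : σ → ℂ) :
    ‖eval (fun j => conj (z j)) (map (algebraMap ℝ ℂ) f + Complex.I • map (algebraMap ℝ ℂ) g)‖ =
      ‖aeval z f - Complex.I * aeval z g‖ := by
  rw [eval_map_add_I_smul, aeval_conj, aeval_conj, ← Complex.norm_conj, map_add, map_mul,
    Complex.conj_conj, Complex.conj_conj, Complex.conj_I, neg_mul, ← sub_eq_add_neg]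

lemma map_conj_ne_C_mul {f g : MvPolynomial σ ℝ} (hg : g ≠ 0) (hfg : ¬∃ c : ℝ, f = c • g)
    (ω : ℂ) :
    map conj (map (algebraMap ℝ ℂ) f + Complex.I • map (algebraMap ℝ ℂ) g) ≠
      C ω * (map (algebraMap ℝ ℂ) f + Complex.I • map (algebraMap ℝ ℂ) g) := by
  intro h
  have hcoeff : ∀ m, conj (algebraMap ℝ ℂ (coeff m f) + Complex.I * algebraMap ℝ ℂ (coeff m g)) =
      ω * (algebraMap ℝ ℂ (coeff m f) + Complex.I * algebraMap ℝ ℂ (coeff m g)) := fun m => by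
    have := congr_arg (coeff m) h
    rwa [coeff_map, coeff_C_mul, coeff_add, coeff_smul, coeff_map, coeff_map, smul_eq_mul] at this
  obtain ⟨m₀, hm₀⟩ := ne_zero_iff.1 hg
  refine hfg ⟨coeff m₀ f / coeff m₀ g, ext _ _ fun m => ?_⟩
  have key := Complex.im_mul_conj_eq_zero_of_conj_eq_mul (hcoeff m) (hcoeff m₀)
  simp only [Complex.coe_algebraMap, Complex.mul_im, Complex.add_re, Complex.add_im,
    Complex.mul_re, Complex.I_re, Complex.I_im, Complex.conj_re, Complex.conj_im,
    Complex.ofReal_re, Complex.ofReal_im] at key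
  rw [coeff_smul, smul_eq_mul, div_mul_eq_mul_div, eq_div_iff hm₀]
  linarith

end MvPolynomial

namespace IsStable

variable {σ : Type*}

lemma norm_eval_conj_le {H : MvPolynomial σ ℂ} (hH : IsStable H) {z : σ → ℂ}
    (hz : ∀ j, 0 < (z j).im) : ‖eval (fun j => conj (z j)) H‖ ≤ ‖eval z H‖ := by
  set P : Polynomial ℂ :=
    aeval (fun j => Polynomial.C ((z j).im : ℂ) * Polynomial.X + Polynomial.C ((z j).re : ℂ)) H
  have hP : ∀ t, P.eval t = eval (fun j => (z j).im * t + (z j).re) H := fun t => by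
    rw [← Polynomial.coe_aeval_eq_eval, comp_aeval_apply, ← coe_aeval_eq_eval]
    simp
  have hP_stable : ∀ t : ℂ, 0 < t.im → P.eval t ≠ 0 := fun t ht => by
    rw [hP]
    exact hH _ fun j => by simpa using mul_pos (hz j) ht
  have h_at_I : (fun j => ((z j).im : ℂ) * Complex.I + (z j).re) = z :=
    funext fun j => Complex.ofReal_im_mul_I_add_ofReal_re (z j)
  have h_at_conj_I : (fun j => ((z j).im : ℂ) * conj Complex.I + (z j).re) = fun j => conj (z j) :=
    funext fun j => Complex.ext (by simp) (by simp)
  have := Polynomial.norm_eval_conj_le_norm_eval hP_stable (t := Complex.I) (by simp)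
  rwa [hP, hP, h_at_I, h_at_conj_I] at this

lemma exists_map_conj_eq_C_mul [Fintype σ] {H : MvPolynomial σ ℂ} (hH : IsStable H)
    {z₀ : σ → ℂ} (hz₀ : ∀ j, 0 < (z₀ j).im) (heq : ‖eval z₀ (map conj H)‖ = ‖eval z₀ H‖) :
    ∃ ω, map conj H = C ω * H := by
  set U : Set (σ → ℂ) := Set.univ.pi fun _ => {w | 0 < w.im}
  have hU_open : IsOpen U :=
    isOpen_set_pi Set.finite_univ fun _ _ => isOpen_lt continuous_const Complex.continuous_im
  have hU_conv : Convex ℝ U := convex_pi fun _ _ => convex_halfSpace_im_gt 0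
  have hdiff : DifferentiableOn ℂ (fun z => eval z (map conj H) / eval z H) U := by
    simp only [div_eq_mul_inv]
    exact ((AnalyticOnNhd.eval_mvPolynomial _).differentiableOn.mono (Set.subset_univ _)).mul
      (((AnalyticOnNhd.eval_mvPolynomial _).differentiableOn.mono (Set.subset_univ _)).inv
        fun z hz => hH z fun j => hz j trivial)
  have hmax : IsMaxOn (norm ∘ fun z => eval z (map conj H) / eval z H) U z₀ :=
    isMaxOn_iff.2 fun z hz => by
      simp only [Function.comp_apply, norm_div, heq, div_self (norm_ne_zero_iff.2 (hH z₀ hz₀))]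
      rw [eval_map_conj, Complex.norm_conj]
      exact div_le_one_of_le₀ (hH.norm_eval_conj_le fun j => hz j trivial) (norm_nonneg _)
  have h_infinite : {w : ℂ | 0 < w.im}.Infinite := infinite_of_mem_nhds Complex.I
    ((isOpen_lt continuous_const Complex.continuous_im).mem_nhds (by simp))
  refine ⟨eval z₀ (map conj H) / eval z₀ H,
    funext_set (fun _ => {w : ℂ | 0 < w.im}) (fun _ => h_infinite) fun z hz => ?_⟩
  have := Complex.eqOn_of_isPreconnected_of_isMaxOn_norm hU_conv.isPreconnected hU_open hdiff
    (fun j _ => hz₀ j) hmax hz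
  rw [eval_mul, eval_C, ← div_eq_iff (hH z fun j => hz j trivial)]
  exact this

lemma norm_eval_conj_lt [Fintype σ] {H : MvPolynomial σ ℂ} (hH : IsStable H)
    (hH_conj : ∀ ω, map conj H ≠ C ω * H) {z : σ → ℂ} (hz : ∀ j, 0 < (z j).im) :
    ‖eval (fun j => conj (z j)) H‖ < ‖eval z H‖ := by
  refine (hH.norm_eval_conj_le hz).lt_of_ne fun heq => ?_
  obtain ⟨ω, hω⟩ := hH.exists_map_conj_eq_C_mul hz (by rw [eval_map_conj, Complex.norm_conj, heq])
  exact hH_conj ω hω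

lemma im_aeval_mul_conj_pos [Fintype σ] {f g : MvPolynomial σ ℝ}
    (hH : IsStable (map (algebraMap ℝ ℂ) f + Complex.I • map (algebraMap ℝ ℂ) g))
    (hg : g ≠ 0) (hfg : ¬∃ c : ℝ, f = c • g) {z : σ → ℂ} (hz : ∀ j, 0 < (z j).im) :
    0 < (aeval z f * conj (aeval z g)).im := by
  rw [← Complex.norm_sub_I_mul_lt_norm_add_I_mul_iff, ← norm_eval_conj_map_add_I_smul,
    ← eval_map_add_I_smul]
  exact hH.norm_eval_conj_lt (map_conj_ne_C_mul hg hfg) hz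

end IsStable

lemma isRealStable_rename_castSucc_add_X_last_mul_iff {n : ℕ} (f g : MvPolynomial (Fin n) ℝ) :
    IsRealStable (rename Fin.castSucc f + X (Fin.last n) * rename Fin.castSucc g) ↔
      ∀ z : Fin n → ℂ, (∀ j, 0 < (z j).im) → ∀ w : ℂ, 0 < w.im →
        aeval z f + w * aeval z g ≠ 0 := by
  simp only [IsRealStable, map_add, map_mul, aeval_rename, aeval_X, Fin.forall_fin_succ']
  constructor
  · intro h z hz w hw
    simpa using h (Fin.snoc z w) ⟨by simpa using hz, by simpa using hw⟩
  · rintro h w ⟨hz, hw⟩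
    exact h _ hz _ hw

lemma aeval_lineRestrict {n : ℕ} (f : MvPolynomial (Fin n) ℝ) (lam a : Fin n → ℝ) (t : ℂ) :
    Polynomial.aeval t (lineRestrict f lam a) = aeval (fun j => (lam j : ℂ) * t + a j) f := by
  rw [lineRestrict, comp_aeval_apply]
  simp

theorem hermite_biehler_multivariate_general (n : ℕ) (f g : MvPolynomial (Fin n) ℝ)
    (hg : g ≠ 0) (hmult : ¬∃ c : ℝ, f = c • g) :
    letI h : MvPolynomial (Fin n) ℂ :=
      MvPolynomial.map (algebraMap ℝ ℂ) f +
        Complex.I • MvPolynomial.map (algebraMap ℝ ℂ) g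
    (IsStable h ↔
      (∀ z : Fin n → ℂ, (∀ j, 0 < (z j).im) →
        ‖MvPolynomial.eval (fun j => starRingEnd ℂ (z j)) h‖ <
          ‖MvPolynomial.eval z h‖)) ∧
    (IsStable h ↔
      IsRealStable (rename Fin.castSucc f +
        X (Fin.last n) * rename Fin.castSucc g)) ∧
    (IsStable h ↔
      (IsRealStable f ∧ IsRealStable g ∧
        ∀ z : Fin n → ℂ, (∀ j, 0 < (z j).im) →
          0 ≤ (MvPolynomial.aeval z f / MvPolynomial.aeval z g).im)) ∧
    (IsStable h ↔
      (∀ lam a : Fin n → ℝ, (∀ i, 0 < lam i) →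
        ∀ t : ℂ, 0 < t.im →
          Polynomial.aeval t (lineRestrict f lam a) +
            Complex.I * Polynomial.aeval t (lineRestrict g lam a) ≠ 0)) := by
  set H := map (algebraMap ℝ ℂ) f + Complex.I • map (algebraMap ℝ ℂ) g
  have hstable : IsStable H ↔ ∀ z : Fin n → ℂ, (∀ j, 0 < (z j).im) →
      aeval z f + Complex.I * aeval z g ≠ 0 := by
    simp only [IsStable, H, eval_map_add_I_smul]
  have hpos : IsStable H → ∀ z : Fin n → ℂ, (∀ j, 0 < (z j).im) →
      0 < (aeval z f * conj (aeval z g)).im := fun hH _ hz =>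
    hH.im_aeval_mul_conj_pos hg hmult hz
  refine ⟨⟨fun hH z hz => hH.norm_eval_conj_lt (map_conj_ne_C_mul hg hmult) hz,
    fun h2 z hz h0 => (norm_nonneg _).not_gt (by simpa [h0] using h2 z hz)⟩, ?_, ?_, ?_⟩
  · rw [isRealStable_rename_castSucc_add_X_last_mul_iff]
    exact ⟨fun hH z hz _ hw => Complex.add_mul_ne_zero_of_im_mul_conj_pos (hpos hH z hz) hw,
      fun h3 => hstable.2 fun z hz => h3 z hz _ (by simp)⟩
  · refine ⟨fun hH => ⟨fun z hz hF => by simpa [hF] using hpos hH z hz,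
      fun z hz hG => by simpa [hG] using hpos hH z hz, fun z hz => ?_⟩,
      fun ⟨_, hg_stable, him⟩ => hstable.2 fun z hz =>
        Complex.add_I_mul_ne_zero_of_im_div_nonneg (hg_stable z hz) (him z hz)⟩
    rw [Complex.im_div_eq_im_mul_conj_div]
    exact div_nonneg (hpos hH z hz).le (Complex.normSq_nonneg _)
  · simp only [aeval_lineRestrict]
    refine ⟨fun hH lam a hlam t ht => hstable.1 hH _ fun j => ?_,
      fun h5 => hstable.2 fun z hz => ?_⟩
    · simpa using mul_pos (hlam j) ht
    · simpa only [Complex.ofReal_im_mul_I_add_ofReal_re] using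
        h5 (fun j => (z j).im) (fun j => (z j).re) hz Complex.I (by simp)

/-- Multivariate Hermite–Biehler theorem: for non-zero real polynomials
`f, g` that are not real constant multiples of each other and `h = f + i·g`,
the following are equivalent: (1) `h` is stable (`g ≪ f`); (2) `|h(z)| > |h(z̄)|`
whenever all coordinates of `z` lie in the open upper half-plane; (3) the
polynomial `f + z_{n+1}·g` in `n+1` variables is real stable; (4) `f` and `g`
are real stable and `Im(f(z)/g(z)) ≥ 0` on the open upper half-plane polydisk;
(5) `g(λt+α) ≪ f(λt+α)` for all `λ ∈ ℝ₊ⁿ`, `α ∈ ℝⁿ`. -/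
theorem hermite_biehler_multivariate (n : ℕ) (f g : MvPolynomial (Fin n) ℝ)
    (hf : f ≠ 0) (hg : g ≠ 0) (hmult : ¬∃ c : ℝ, f = c • g) :
    letI h : MvPolynomial (Fin n) ℂ :=
      MvPolynomial.map (algebraMap ℝ ℂ) f +
        Complex.I • MvPolynomial.map (algebraMap ℝ ℂ) g
    (IsStable h ↔
      (∀ z : Fin n → ℂ, (∀ j, 0 < (z j).im) →
        ‖MvPolynomial.eval (fun j => starRingEnd ℂ (z j)) h‖ <
          ‖MvPolynomial.eval z h‖)) ∧
    (IsStable h ↔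
      IsRealStable (rename Fin.castSucc f +
        X (Fin.last n) * rename Fin.castSucc g)) ∧
    (IsStable h ↔
      (IsRealStable f ∧ IsRealStable g ∧
        ∀ z : Fin n → ℂ, (∀ j, 0 < (z j).im) →
          0 ≤ (MvPolynomial.aeval z f / MvPolynomial.aeval z g).im)) ∧
    (IsStable h ↔
      (∀ lam a : Fin n → ℝ, (∀ i, 0 < lam i) →
        ∀ t : ℂ, 0 < t.im →
          Polynomial.aeval t (lineRestrict f lam a) +
            Complex.I * Polynomial.aeval t (lineRestrict g lam a) ≠ 0)) :=
  hermite_biehler_multivariate_general n f g hg hmult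
end

section
/- Let T : ℂ_{(1,…,1)}[z₁,…,zₙ] → ℂ[z₁,…,zₙ] be a linear operator on the space of multi-affine polynomials in n variables such that the polynomial G_T(z,w) = T[Π_{i=1}^n (zᵢ+wᵢ)] = Σ_{S ⊆ [n]} T(z^S)·w^{[n]∖S} in 2n variables is stable. Then T preserves stability: for every stable multi-affine f ∈ ℂ_{(1,…,1)}[z₁,…,zₙ], T(f) is stable or identically zero. -/
open MvPolynomial

/-!
Borcea–Brändén contraction. Write `f = ∑_U c_U u^U`; then `G_T(z, w) f(u)` is stable in `3n`
variables. Contracting a pair `(wᵢ, uᵢ)`, i.e. replacing `p₀₀ + wᵢ p₁₀ + uᵢ p₀₁ + wᵢ uᵢ p₁₁` by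
`p₁₀ + p₀₁`, preserves "stable or zero": on the diagonal `wᵢ = uᵢ = s` the polynomial becomes a
quadratic in `s` without zeros in the upper half-plane, so `p₁₀ + p₀₁` divided by `p₁₁` or by `p₀₀`
has imaginary part of constant sign, and by the open mapping theorem such a quotient can only
vanish at a point of the upper half-space if it vanishes identically. Contracting all `n` pairs
sends `w^{[n]∖S} u^U` to `[S = U]`, leaving `∑_S c_S T(z^S) = T(f)(z)`.
-/

open Filter Topology

section Stable

variable {σ τ : Type*}

theorem IsStable.rename {p : MvPolynomial σ ℂ} (hp : IsStable p) (g : σ → τ) :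
    IsStable (MvPolynomial.rename g p) := fun z hz => by
  rw [eval_rename]
  exact hp _ fun i => hz (g i)

theorem IsStable.of_rename {p : MvPolynomial σ ℂ} {g : σ → τ} (hg : g.Injective)
    (hp : IsStable (MvPolynomial.rename g p)) : IsStable p := fun z hz => by
  have hext : ∀ j, 0 < (Function.extend g z (fun _ => Complex.I) j).im := by
    intro j
    by_cases hj : ∃ i, g i = j
    · obtain ⟨i, rfl⟩ := hj
      rw [hg.extend_apply]
      exact hz i
    · rw [Function.extend_apply' _ _ _ hj]
      simp
  simpa [eval_rename, Function.extend_comp hg] using hp _ hext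

theorem IsStable.mul {p q : MvPolynomial σ ℂ} (hp : IsStable p) (hq : IsStable q) :
    IsStable (p * q) := fun z hz => by
  rw [eval_mul]
  exact mul_ne_zero (hp z hz) (hq z hz)

theorem setOf_im_pos_infinite : {z : ℂ | 0 < z.im}.Infinite :=
  infinite_of_mem_nhds Complex.I
    ((isOpen_lt continuous_const Complex.continuous_im).mem_nhds (by simp))

theorem eq_zero_of_eval_eq_zero_of_im_pos {p : MvPolynomial σ ℂ}
    (h : ∀ z : σ → ℂ, (∀ i, 0 < (z i).im) → eval z p = 0) : p = 0 :=
  funext_set (fun _ => {z : ℂ | 0 < z.im}) (fun _ => setOf_im_pos_infinite)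
    fun z hz => by simpa using h z fun i => hz i trivial

end Stable

section Quadratic

open Complex

theorem im_div_nonneg_of_quadratic_ne_zero {a b c : ℂ} (hc : c ≠ 0)
    (h : ∀ s : ℂ, 0 < s.im → a + b * s + c * s ^ 2 ≠ 0) : 0 ≤ (b / c).im := by
  obtain ⟨w, hw⟩ := IsAlgClosed.exists_pow_nat_eq (b ^ 2 - 4 * a * c) two_pos
  set r₁ := (-b + w) / (2 * c)
  set r₂ := (-b - w) / (2 * c)
  have hfactor : ∀ s : ℂ, a + b * s + c * s ^ 2 = c * (s - r₁) * (s - r₂) := fun s => by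
    simp only [r₁, r₂]
    field_simp
    linear_combination hw
  have him_root : ∀ r, r = r₁ ∨ r = r₂ → r.im ≤ 0 := fun r hr => by
    by_contra! hpos
    exact h r hpos (by rcases hr with rfl | rfl <;> rw [hfactor] <;> ring)
  have hsum : b / c = -(r₁ + r₂) := by
    simp only [r₁, r₂]
    field_simp
    ring
  rw [hsum, neg_im, add_im]
  linarith [him_root r₁ (.inl rfl), him_root r₂ (.inr rfl)]

theorem im_div_nonpos_of_quadratic_ne_zero {a b c : ℂ} (ha : a ≠ 0)
    (h : ∀ s : ℂ, 0 < s.im → a + b * s + c * s ^ 2 ≠ 0) : (b / a).im ≤ 0 := by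
  -- `s ↦ -s⁻¹` preserves the upper half-plane, so the reversed quadratic has no zeros there.
  have hrev : ∀ s : ℂ, 0 < s.im → c + -b * s + a * s ^ 2 ≠ 0 := fun s hs => by
    have hs0 : s ≠ 0 := fun h0 => by simp [h0] at hs
    have him : 0 < (-s⁻¹).im := by
      rw [neg_im, inv_im, neg_div, neg_neg]
      exact div_pos hs (normSq_pos.2 hs0)
    have : c + -b * s + a * s ^ 2 = s ^ 2 * (a + b * -s⁻¹ + c * (-s⁻¹) ^ 2) := by
      field_simp
      ring
    rw [this]
    exact mul_ne_zero (pow_ne_zero _ hs0) (h _ him)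
  have := im_div_nonneg_of_quadratic_ne_zero ha hrev
  rw [neg_div, neg_im] at this
  linarith

end Quadratic

section Analytic

theorem eventually_eq_zero_of_im_nonpos {E : Type*} [NormedAddCommGroup E] [NormedSpace ℂ E]
    {g : E → ℂ} {x₀ : E} (hg : AnalyticAt ℂ g x₀) (h0 : g x₀ = 0)
    (him : ∀ᶠ x in 𝓝 x₀, (g x).im ≤ 0) : ∀ᶠ x in 𝓝 x₀, g x = 0 := by
  rcases hg.eventually_constant_or_nhds_le_map_nhds with hconst | hopen
  · simpa only [h0] using hconst
  exfalso
  have hnhds : ∀ᶠ y in 𝓝 (0 : ℂ), y.im ≤ 0 := by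
    rw [← h0]
    exact hopen (eventually_map.2 him)
  have hline : Tendsto (fun r : ℝ => (r : ℂ) * Complex.I) (𝓝[>] 0) (𝓝 0) := by
    refine (Continuous.tendsto' ?_ 0 0 (by simp)).mono_left nhdsWithin_le_nhds
    fun_prop
  obtain ⟨r, hr, hr0⟩ := ((hline.eventually hnhds).and self_mem_nhdsWithin).exists
  simp only [Complex.mul_im, Complex.ofReal_re, Complex.I_im, Complex.ofReal_im, Complex.I_re,
    mul_one, mul_zero, add_zero] at hr
  exact absurd hr (not_le.2 hr0)

variable {σ : Type*} [Fintype σ]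

theorem MvPolynomial.analyticAt_eval (p : MvPolynomial σ ℂ) (x₀ : σ → ℂ) :
    AnalyticAt ℂ (fun x => eval x p) x₀ :=
  AnalyticAt.aeval_mvPolynomial (f := fun x => x)
    (fun i => (ContinuousLinearMap.proj (R := ℂ) (φ := fun _ : σ => ℂ) i).analyticAt x₀) p

theorem MvPolynomial.eq_zero_of_eval_eventuallyEq_zero {p : MvPolynomial σ ℂ} {x₀ : σ → ℂ}
    (h : (fun x => eval x p) =ᶠ[𝓝 x₀] 0) : p = 0 := by
  have hglobal := AnalyticOnNhd.eq_of_eventuallyEq (fun x _ => p.analyticAt_eval x)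
    (analyticOnNhd_const (v := (0 : ℂ))) h
  exact MvPolynomial.funext fun x => by simpa using congrFun hglobal x

theorem eq_zero_of_im_div_nonpos {b d : MvPolynomial σ ℂ} {x₀ : σ → ℂ}
    (hx₀ : ∀ i, 0 < (x₀ i).im) (hb : eval x₀ b = 0) (hd : eval x₀ d ≠ 0)
    (him : ∀ x : σ → ℂ, (∀ i, 0 < (x i).im) → eval x d ≠ 0 →
      (eval x b / eval x d).im ≤ 0) :
    b = 0 := by
  have hupper : ∀ᶠ x in 𝓝 x₀, ∀ i, 0 < (x i).im := eventually_all.2 fun i =>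
    continuousAt_const.eventually_lt
      (Complex.continuous_im.comp (continuous_apply i)).continuousAt (hx₀ i)
  have hd_ne : ∀ᶠ x in 𝓝 x₀, eval x d ≠ 0 :=
    (MvPolynomial.continuous_eval d).continuousAt.eventually_ne hd
  have hquot := eventually_eq_zero_of_im_nonpos
    ((b.analyticAt_eval x₀).div (d.analyticAt_eval x₀) hd) (by simp [hb])
    (by filter_upwards [hupper, hd_ne] with x hx hdx using him x hx hdx)
  refine MvPolynomial.eq_zero_of_eval_eventuallyEq_zero (x₀ := x₀) ?_
  filter_upwards [hquot, hd_ne] with x hx hdx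
  simpa [hdx] using hx

end Analytic

section Contraction

variable {σ : Type*} {p₀₀ p₁₀ p₀₁ p₁₁ : MvPolynomial σ ℂ}

theorem contraction_eq_zero
    (h : ∀ x : σ → ℂ, (∀ i, 0 < (x i).im) → ∀ s t : ℂ, 0 < s.im → 0 < t.im →
      eval x p₀₀ + s * eval x p₁₀ + t * eval x p₀₁ + s * t * eval x p₁₁ = 0) :
    p₁₀ + p₀₁ = 0 := by
  refine eq_zero_of_eval_eq_zero_of_im_pos fun x hx => ?_
  have hI : 0 < Complex.I.im := by simp
  have h2I : 0 < (2 * Complex.I).im := by simp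
  have q₁ := h x hx _ _ hI hI
  have q₂ := h x hx _ _ hI h2I
  have q₃ := h x hx _ _ h2I hI
  have q₄ := h x hx _ _ h2I h2I
  rw [map_add]
  -- `-4 q(i, i) + 3 q(i, 2i) + 3 q(2i, i) - 2 q(2i, 2i) = i (p₁₀ + p₀₁)` for the bilinear `q`.
  linear_combination (-Complex.I) * (-4 * q₁ + 3 * q₂ + 3 * q₃ - 2 * q₄)
    + (eval x p₁₀ + eval x p₀₁) * Complex.I_mul_I

theorem contraction_eq_zero_or_isStable [Fintype σ]
    (h : ∀ x : σ → ℂ, (∀ i, 0 < (x i).im) → ∀ s t : ℂ, 0 < s.im → 0 < t.im →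
      eval x p₀₀ + s * eval x p₁₀ + t * eval x p₀₁ + s * t * eval x p₁₁ ≠ 0) :
    p₁₀ + p₀₁ = 0 ∨ IsStable (p₁₀ + p₀₁) := by
  refine or_iff_not_imp_right.2 fun hns => ?_
  obtain ⟨x₀, hx₀, hb⟩ :
      ∃ x₀ : σ → ℂ, (∀ i, 0 < (x₀ i).im) ∧ eval x₀ (p₁₀ + p₀₁) = 0 := by
    simpa [IsStable] using hns
  have hdiag : ∀ x : σ → ℂ, (∀ i, 0 < (x i).im) → ∀ s : ℂ, 0 < s.im →
      eval x p₀₀ + eval x (p₁₀ + p₀₁) * s + eval x p₁₁ * s ^ 2 ≠ 0 := fun x hx s hs => by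
    convert h x hx s s hs hs using 1
    rw [map_add]
    ring
  by_cases ha : eval x₀ p₀₀ = 0
  · have hc : eval x₀ p₁₁ ≠ 0 := fun hc =>
      hdiag x₀ hx₀ Complex.I (by simp) (by rw [ha, hb, hc]; ring)
    refine neg_eq_zero.1 (eq_zero_of_im_div_nonpos hx₀ (by rw [map_neg, hb, neg_zero]) hc ?_)
    intro x hx hd
    have := im_div_nonneg_of_quadratic_ne_zero hd (hdiag x hx)
    rw [map_neg, neg_div, Complex.neg_im]
    linarith
  · exact eq_zero_of_im_div_nonpos hx₀ hb ha fun x hx hd =>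
      im_div_nonpos_of_quadratic_ne_zero hd (hdiag x hx)

end Contraction

section Multiaffine

variable {R ι : Type*} [CommSemiring R] [DecidableEq ι]

theorem sum_single_one_apply (S : Finset ι) (i : ι) :
    (∑ j ∈ S, Finsupp.single j 1 : ι →₀ ℕ) i = if i ∈ S then 1 else 0 := by
  simp [Finsupp.finsetSum_apply, Finsupp.single_apply]

theorem MvPolynomial.eq_sum_prod_X_of_degreeOf_le_one [Fintype ι] {f : MvPolynomial ι R}
    (hf : ∀ i, f.degreeOf i ≤ 1) :
    f = ∑ S : Finset ι, C (f.coeff (∑ i ∈ S, Finsupp.single i 1)) * ∏ i ∈ S, X i := by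
  ext m
  simp only [coeff_sum, X, ← monomial_sum_one, coeff_C_mul, coeff_monomial, mul_ite, mul_one,
    mul_zero]
  by_cases hm : m ∈ f.support
  · have hm_le : ∀ i, m i ≤ 1 := fun i => (monomial_le_degreeOf i hm).trans (hf i)
    have hiff (S : Finset ι) : (∑ i ∈ S, Finsupp.single i 1 : ι →₀ ℕ) = m ↔ S = m.support := by
      constructor
      · rintro rfl
        ext i
        simp [sum_single_one_apply]
      · rintro rfl
        ext i
        rw [sum_single_one_apply]
        split_ifs with hi
        · have := hm_le i
          rw [Finsupp.mem_support_iff] at hi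
          omega
        · exact (Finsupp.notMem_support_iff.1 hi).symm
    simp_rw [hiff, Finset.sum_ite_eq', Finset.mem_univ, if_true, (hiff _).2 rfl]
  · rw [notMem_support_iff.1 hm]
    refine (Finset.sum_eq_zero fun S _ => ?_).symm
    split_ifs with hS
    · rw [hS, notMem_support_iff.1 hm]
    · rfl

end Multiaffine

theorem Finset.prod_sdiff_eq_ite_mul_prod_sdiff_insert {α M : Type*} [DecidableEq α]
    [CommMonoid M] {κ : α} {K : Finset α} (hκ : κ ∉ K) (F : Finset α) (g : α → M) :
    ∏ i ∈ F \ K, g i = (if κ ∈ F then g κ else 1) * ∏ i ∈ F \ insert κ K, g i := by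
  rw [sdiff_insert]
  split_ifs with h
  · exact (mul_prod_erase _ _ (mem_sdiff.2 ⟨h, hκ⟩)).symm
  · rw [one_mul, erase_eq_of_notMem fun h' => h (mem_sdiff.1 h').1]

section Symbol

variable {R ι : Type*} [CommSemiring R] [Fintype ι] [DecidableEq ι]
  (A : Finset ι → MvPolynomial ι R) (c : Finset ι → R)

/-- Variables `Sum.inl i`, `Sum.inr (Sum.inl i)`, `Sum.inr (Sum.inr i)` play the roles of
`zᵢ`, `wᵢ`, `uᵢ`; the indices in `K` have been contracted, so `wᵢ, uᵢ` for `i ∈ K` are absent. -/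
noncomputable def symbolTerm (K S U : Finset ι) : MvPolynomial (ι ⊕ ι ⊕ ι) R :=
  rename Sum.inl (A S) * C (c U) * (∏ i ∈ Sᶜ \ K, X (Sum.inr (Sum.inl i))) *
    ∏ i ∈ U \ K, X (Sum.inr (Sum.inr i))

open Classical in
noncomputable def symbolSum (K : Finset ι) (P : Finset ι → Finset ι → Prop) :
    MvPolynomial (ι ⊕ ι ⊕ ι) R :=
  ∑ S, ∑ U, if P S U then symbolTerm A c K S U else 0

def AgreeOn (K S U : Finset ι) : Prop := ∀ i ∈ K, i ∈ S ↔ i ∈ U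

/-- For `A S = T(z^S)` and `f = ∑ c_U u^U`, this is `G_T(z, w) f(u)` with the pairs `(wᵢ, uᵢ)`,
`i ∈ K`, contracted: `w^{[n]∖S} u^U ↦ [S ∩ K = U ∩ K] w^{Sᶜ∖K} u^{U∖K}`. -/
noncomputable def contractedSymbol (K : Finset ι) : MvPolynomial (ι ⊕ ι ⊕ ι) R :=
  symbolSum A c K (AgreeOn K)

variable {A c}

theorem symbolTerm_eq_mul_symbolTerm_insert {κ : ι} {K : Finset ι} (hκ : κ ∉ K)
    (S U : Finset ι) :
    symbolTerm A c K S U = (if κ ∈ S then 1 else X (Sum.inr (Sum.inl κ))) *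
      (if κ ∈ U then X (Sum.inr (Sum.inr κ)) else 1) * symbolTerm A c (insert κ K) S U := by
  simp only [symbolTerm, Finset.prod_sdiff_eq_ite_mul_prod_sdiff_insert hκ, Finset.mem_compl,
    ite_not]
  ring

theorem contractedSymbol_eq_of_notMem {κ : ι} {K : Finset ι} (hκ : κ ∉ K) :
    contractedSymbol A c K =
      symbolSum A c (insert κ K) (fun S U => AgreeOn K S U ∧ κ ∈ S ∧ κ ∉ U) +
      X (Sum.inr (Sum.inl κ)) *
        symbolSum A c (insert κ K) (fun S U => AgreeOn K S U ∧ κ ∉ S ∧ κ ∉ U) +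
      X (Sum.inr (Sum.inr κ)) *
        symbolSum A c (insert κ K) (fun S U => AgreeOn K S U ∧ κ ∈ S ∧ κ ∈ U) +
      X (Sum.inr (Sum.inl κ)) * X (Sum.inr (Sum.inr κ)) *
        symbolSum A c (insert κ K) (fun S U => AgreeOn K S U ∧ κ ∉ S ∧ κ ∈ U) := by
  simp only [contractedSymbol, symbolSum, Finset.mul_sum, ← Finset.sum_add_distrib]
  refine Finset.sum_congr rfl fun S _ => Finset.sum_congr rfl fun U _ => ?_
  rw [symbolTerm_eq_mul_symbolTerm_insert hκ]
  by_cases hSU : AgreeOn K S U <;> by_cases hS : κ ∈ S <;> by_cases hU : κ ∈ U <;>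
    simp [hSU, hS, hU]

theorem contractedSymbol_insert (κ : ι) (K : Finset ι) :
    contractedSymbol A c (insert κ K) =
      symbolSum A c (insert κ K) (fun S U => AgreeOn K S U ∧ κ ∉ S ∧ κ ∉ U) +
      symbolSum A c (insert κ K) (fun S U => AgreeOn K S U ∧ κ ∈ S ∧ κ ∈ U) := by
  simp only [contractedSymbol, symbolSum, ← Finset.sum_add_distrib]
  refine Finset.sum_congr rfl fun S _ => Finset.sum_congr rfl fun U _ => ?_
  by_cases hS : κ ∈ S <;> by_cases hU : κ ∈ U <;> simp [AgreeOn, hS, hU]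

theorem eval_update_symbolSum {κ : ι} {L : Finset ι} (hκ : κ ∈ L)
    (P : Finset ι → Finset ι → Prop) (x : ι ⊕ ι ⊕ ι → R) (s t : R) :
    eval (Function.update (Function.update x (Sum.inr (Sum.inl κ)) s) (Sum.inr (Sum.inr κ)) t)
      (symbolSum A c L P) = eval x (symbolSum A c L P) := by
  set x' := Function.update (Function.update x (Sum.inr (Sum.inl κ)) s) (Sum.inr (Sum.inr κ)) t
  have hne : ∀ F : Finset ι, ∀ i ∈ F \ L, i ≠ κ := fun F i hi h =>
    (Finset.mem_sdiff.1 hi).2 (h ▸ hκ)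
  have hz : x' ∘ Sum.inl = x ∘ Sum.inl := by
    ext i
    simp [x']
  have hw (F : Finset ι) :
      ∏ i ∈ F \ L, x' (Sum.inr (Sum.inl i)) = ∏ i ∈ F \ L, x (Sum.inr (Sum.inl i)) :=
    Finset.prod_congr rfl fun i hi => by simp [x', hne F i hi]
  have hu (F : Finset ι) :
      ∏ i ∈ F \ L, x' (Sum.inr (Sum.inr i)) = ∏ i ∈ F \ L, x (Sum.inr (Sum.inr i)) :=
    Finset.prod_congr rfl fun i hi => by simp [x', hne F i hi]
  simp only [symbolSum, symbolTerm, map_sum, apply_ite (eval _), map_mul, map_prod, eval_rename,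
    eval_C, eval_X, map_zero, hz, hw, hu]

theorem contractedSymbol_empty :
    contractedSymbol A c ∅ =
      rename (Sum.elim Sum.inl (Sum.inr ∘ Sum.inl))
          (∑ S : Finset ι, rename Sum.inl (A S) * ∏ i ∈ Sᶜ, X (Sum.inr i)) *
        rename (Sum.inr ∘ Sum.inr) (∑ U : Finset ι, C (c U) * ∏ i ∈ U, X i) := by
  simp only [contractedSymbol, symbolSum, symbolTerm, AgreeOn, Finset.notMem_empty,
    IsEmpty.forall_iff, implies_true, if_true, Finset.sdiff_empty, map_sum, map_mul, map_prod,
    rename_rename, rename_X, rename_C, Sum.elim_comp_inl, Function.comp_apply, Sum.elim_inr,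
    Finset.sum_mul_sum]
  refine Finset.sum_congr rfl fun S _ => Finset.sum_congr rfl fun U _ => ?_
  ring

theorem contractedSymbol_univ :
    contractedSymbol A c Finset.univ = rename Sum.inl (∑ S : Finset ι, c S • A S) := by
  have hsdiff (F : Finset ι) : F \ Finset.univ = ∅ :=
    Finset.sdiff_eq_empty_iff_subset.2 F.subset_univ
  simp only [contractedSymbol, symbolSum, symbolTerm, AgreeOn, Finset.mem_univ, forall_const,
    ← Finset.ext_iff, Finset.sum_ite_eq, if_true, hsdiff, Finset.prod_empty, mul_one, map_sum,
    smul_eq_C_mul, map_mul, rename_C, mul_comm (C _)]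

end Symbol

theorem contractedSymbol_eq_zero_or_isStable {ι : Type*} [Fintype ι] [DecidableEq ι]
    {A : Finset ι → MvPolynomial ι ℂ} {c : Finset ι → ℂ}
    (h₀ : IsStable (contractedSymbol A c ∅)) (K : Finset ι) :
    contractedSymbol A c K = 0 ∨ IsStable (contractedSymbol A c K) := by
  induction K using Finset.induction_on with
  | empty => exact .inr h₀
  | insert κ K hκ ih =>
    set p₀₀ := symbolSum A c (insert κ K) (fun S U => AgreeOn K S U ∧ κ ∈ S ∧ κ ∉ U)
    set p₁₀ := symbolSum A c (insert κ K) (fun S U => AgreeOn K S U ∧ κ ∉ S ∧ κ ∉ U)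
    set p₀₁ := symbolSum A c (insert κ K) (fun S U => AgreeOn K S U ∧ κ ∈ S ∧ κ ∈ U)
    set p₁₁ := symbolSum A c (insert κ K) (fun S U => AgreeOn K S U ∧ κ ∉ S ∧ κ ∈ U)
    have hbilin : ∀ (x : ι ⊕ ι ⊕ ι → ℂ) (s t : ℂ),
        eval (Function.update (Function.update x (Sum.inr (Sum.inl κ)) s)
          (Sum.inr (Sum.inr κ)) t) (contractedSymbol A c K) =
        eval x p₀₀ + s * eval x p₁₀ + t * eval x p₀₁ + s * t * eval x p₁₁ := by
      intro x s t
      simp only [contractedSymbol_eq_of_notMem hκ, map_add, map_mul, eval_X, p₀₀, p₁₀, p₀₁, p₁₁,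
        eval_update_symbolSum (Finset.mem_insert_self κ K)]
      simp
    have hupper : ∀ (x : ι ⊕ ι ⊕ ι → ℂ) (s t : ℂ), (∀ v, 0 < (x v).im) → 0 < s.im →
        0 < t.im → ∀ v, 0 < (Function.update (Function.update x (Sum.inr (Sum.inl κ)) s)
          (Sum.inr (Sum.inr κ)) t v).im := by
      intro x s t hx hs ht v
      simp only [Function.update_apply]
      split_ifs
      exacts [ht, hs, hx v]
    rw [contractedSymbol_insert]
    rcases ih with h | h
    · exact .inl <| contraction_eq_zero fun x _ s t _ _ => by rw [← hbilin, h, map_zero]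
    · exact contraction_eq_zero_or_isStable fun x hx s t hs ht => by
        rw [← hbilin]
        exact h _ (hupper x s t hx hs ht)

/-- If the symbol `G_T(z,w) = T[∏ᵢ(zᵢ+wᵢ)] = ∑_{S ⊆ [n]} T(z^S)·w^{[n]∖S}` of a
linear operator `T` on multi-affine polynomials is stable (as a polynomial in
`2n` variables, the `z`-variables indexed by `Sum.inl` and the `w`-variables by
`Sum.inr`), then `T` maps every stable multi-affine polynomial to a stable
polynomial or to zero. -/
theorem multiaffine_symbol_stable_imp_preserver (n : ℕ)
    (T : MvPolynomial (Fin n) ℂ →ₗ[ℂ] MvPolynomial (Fin n) ℂ)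
    (hsymb : IsStable (∑ S : Finset (Fin n),
      rename Sum.inl (T (∏ i ∈ S, X i)) * ∏ i ∈ Sᶜ, X (Sum.inr i))) :
    ∀ f : MvPolynomial (Fin n) ℂ, (∀ i, f.degreeOf i ≤ 1) → IsStable f →
      T f = 0 ∨ IsStable (T f) := by
  intro f hdeg hf
  set A : Finset (Fin n) → MvPolynomial (Fin n) ℂ := fun S => T (∏ i ∈ S, X i)
  set c : Finset (Fin n) → ℂ := fun S => f.coeff (∑ i ∈ S, Finsupp.single i 1)
  have hf_eq : f = ∑ S, C (c S) * ∏ i ∈ S, X i := eq_sum_prod_X_of_degreeOf_le_one hdeg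
  have hTf : T f = ∑ S, c S • A S := by
    conv_lhs => rw [hf_eq]
    simp only [map_sum, ← smul_eq_C_mul, map_smul, A]
  have h₀ : IsStable (contractedSymbol A c ∅) := by
    rw [contractedSymbol_empty, ← hf_eq]
    exact (hsymb.rename _).mul (hf.rename _)
  rcases contractedSymbol_eq_zero_or_isStable h₀ Finset.univ with h | h <;>
    rw [contractedSymbol_univ, ← hTf] at h
  · exact .inl (rename_injective _ Sum.inl_injective (by rwa [map_zero]))
  · exact .inr (h.of_rename Sum.inl_injective)
end

section
/- Let κ, γ ∈ ℕⁿ and let T : ℂ_κ[z₁,…,zₙ] → ℂ_γ[z₁,…,zₙ] be a linear operator. Then the algebraic symbol of the polarization of T equals the polarization of the algebraic symbol of T: G_{Π(T)} = Π↑_{γ⊕κ}(G_T), where Π(T) = Π↑_γ ∘ T ∘ Π↓_κ and Π↑_{γ⊕κ} : ℂ_{γ⊕κ}[z₁,…,zₙ,w₁,…,wₙ] → ℂ^{γ⊕κ}_{MA} is the polarization operator in all 2n groups of variables. -/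
open MvPolynomial

/-- The polarization `Π↑_κ(f)` of a polynomial `f` of degree at most `κᵢ` in
the `i`-th variable: the multi-affine polynomial in the variables
`{z_{ij} : i, 1 ≤ j ≤ κᵢ}` given on monomials by
`Π↑_κ(z^α) = C(κ,α)⁻¹·E_{α₁}(z_{1,1},…,z_{1,κ₁})⋯E_{αₙ}(z_{n,1},…,z_{n,κₙ})`,
where `E_k` is the `k`-th elementary symmetric polynomial. -/
noncomputable def polarization {σ : Type*} [Fintype σ] (κ : σ → ℕ)
    (f : MvPolynomial σ ℂ) : MvPolynomial ((i : σ) × Fin (κ i)) ℂ :=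
  ∑ α ∈ f.support,
    (f.coeff α * ((∏ i, ((κ i).choose (α i) : ℕ) : ℕ) : ℂ)⁻¹) •
      ∏ i, rename (Sigma.mk i) (esymm (Fin (κ i)) ℂ (α i))

/-- The algebraic symbol `G_T(z,w) = T[(z+w)^κ] = ∑_{α ≤ κ} C(κ,α) T(z^α) w^{κ-α}`
of a linear operator `T`, as a polynomial in `2n` variables (the `z`-variables
indexed by `Sum.inl`, the `w`-variables by `Sum.inr`). -/
noncomputable def algSymbol {n : ℕ} (κ : Fin n → ℕ)
    (T : MvPolynomial (Fin n) ℂ →ₗ[ℂ] MvPolynomial (Fin n) ℂ) :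
    MvPolynomial (Fin n ⊕ Fin n) ℂ :=
  ∑ α ∈ Finset.Iic (Finsupp.equivFunOnFinite.symm κ),
    C ((∏ i, (κ i).choose (α i) : ℕ) : ℂ) *
      (rename Sum.inl (T (monomial α 1)) *
        monomial (Finsupp.mapDomain Sum.inr (Finsupp.equivFunOnFinite.symm κ - α)) 1)

/-- Identification of the variables of the polarization of a `2n`-variable
polynomial (with degree bounds `γ ⊕ κ`) with the disjoint union of the
polarized `z`-variables and the polarized `w`-variables. -/
def reindexPolar {n : ℕ} (γ κ : Fin n → ℕ) :
    ((v : Fin n ⊕ Fin n) × Fin (Sum.elim γ κ v)) →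
      ((i : Fin n) × Fin (γ i)) ⊕ ((i : Fin n) × Fin (κ i)) :=
  fun p =>
    match p with
    | ⟨Sum.inl i, j⟩ => Sum.inl ⟨i, j⟩
    | ⟨Sum.inr i, j⟩ => Sum.inr ⟨i, j⟩

namespace PolarProofAux

open Finset

variable {σ : Type*} [Fintype σ]

/-- The multinomial-type coefficient `C(κ,α)` as a complex number. -/
noncomputable def Cf (κ : σ → ℕ) (α : σ →₀ ℕ) : ℂ :=
  ((∏ i, ((κ i).choose (α i) : ℕ) : ℕ) : ℂ)

/-- The product of elementary symmetric polynomials appearing in polarization. -/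
noncomputable def Pe (κ : σ → ℕ) (α : σ →₀ ℕ) : MvPolynomial ((i : σ) × Fin (κ i)) ℂ :=
  ∏ i, rename (Sigma.mk i) (esymm (Fin (κ i)) ℂ (α i))

lemma polarization_eq_sum (κ : σ → ℕ) (f : MvPolynomial σ ℂ)
    {A : Finset (σ →₀ ℕ)} (hA : f.support ⊆ A) :
    polarization κ f = ∑ α ∈ A, (f.coeff α * (Cf κ α)⁻¹) • Pe κ α := by
  simp only [polarization, Cf, Pe]
  refine Finset.sum_subset hA fun α _ hα => ?_
  rw [MvPolynomial.notMem_support_iff.mp hα, zero_mul, zero_smul]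

lemma polarization_monomial (κ : σ → ℕ) (α : σ →₀ ℕ) (c : ℂ) :
    polarization κ (monomial α c) = (c * (Cf κ α)⁻¹) • Pe κ α := by
  classical
  rcases eq_or_ne c 0 with rfl | hc
  · simp only [map_zero, polarization, MvPolynomial.support_zero, Finset.sum_empty,
      zero_mul, zero_smul]
  · rw [polarization_eq_sum κ _ (A := {α}) (by rw [MvPolynomial.support_monomial]; simp [hc]),
      Finset.sum_singleton, MvPolynomial.coeff_monomial, if_pos rfl]

lemma polarization_zero (κ : σ → ℕ) : polarization κ (0 : MvPolynomial σ ℂ) = 0 := by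
  simp [polarization]

lemma polarization_add (κ : σ → ℕ) (f g : MvPolynomial σ ℂ) :
    polarization κ (f + g) = polarization κ f + polarization κ g := by
  classical
  rw [polarization_eq_sum κ (f + g) (A := f.support ∪ g.support) MvPolynomial.support_add,
    polarization_eq_sum κ f (A := f.support ∪ g.support) Finset.subset_union_left,
    polarization_eq_sum κ g (A := f.support ∪ g.support) Finset.subset_union_right,
    ← Finset.sum_add_distrib]
  exact Finset.sum_congr rfl fun α _ => by rw [MvPolynomial.coeff_add, add_mul, add_smul]

lemma polarization_smul (κ : σ → ℕ) (c : ℂ) (f : MvPolynomial σ ℂ) :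
    polarization κ (c • f) = c • polarization κ f := by
  rw [polarization_eq_sum κ (c • f) (A := f.support) MvPolynomial.support_smul,
    polarization_eq_sum κ f (A := f.support) subset_rfl, Finset.smul_sum]
  refine Finset.sum_congr rfl fun α _ => ?_
  rw [MvPolynomial.coeff_smul, smul_eq_mul, mul_assoc, mul_smul]

lemma polarization_sum {ι : Type*} (s : Finset ι) (g : ι → MvPolynomial σ ℂ) (κ : σ → ℕ) :
    polarization κ (∑ a ∈ s, g a) = ∑ a ∈ s, polarization κ (g a) := by
  classical
  induction s using Finset.cons_induction with
  | empty => simp [polarization_zero]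
  | cons a s ha ih => rw [Finset.sum_cons, polarization_add, ih, Finset.sum_cons]


variable {n : ℕ}

/-- The `w`-part: product of elementary symmetric polynomials in the `inr` variables. -/
noncomputable def Wp (γ κ : Fin n → ℕ) (β : Fin n →₀ ℕ) :
    MvPolynomial (((i : Fin n) × Fin (γ i)) ⊕ ((i : Fin n) × Fin (κ i))) ℂ :=
  ∏ i, rename (fun j => Sum.inr ⟨i, j⟩) (esymm (Fin (κ i)) ℂ (β i))

lemma rename_polarization_mul (γ κ : Fin n → ℕ) (f : MvPolynomial (Fin n) ℂ)
    (β : Fin n →₀ ℕ) :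
    rename (reindexPolar γ κ) (polarization (Sum.elim γ κ)
      (rename Sum.inl f * monomial (Finsupp.mapDomain Sum.inr β) 1)) =
    (Cf κ β)⁻¹ • (rename Sum.inl (polarization γ f) * Wp γ κ β) := by
  classical
  have happ1 : ∀ (δ : Fin n →₀ ℕ) (i : Fin n),
      ((Finsupp.mapDomain Sum.inl δ + Finsupp.mapDomain Sum.inr β : (Fin n ⊕ Fin n) →₀ ℕ)) (Sum.inl i) = δ i := by
    intro δ i
    rw [Finsupp.add_apply, Finsupp.mapDomain_apply Sum.inl_injective,
      Finsupp.mapDomain_notin_range _ _ (by simp), add_zero]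
  have happ2 : ∀ (δ : Fin n →₀ ℕ) (i : Fin n),
      ((Finsupp.mapDomain Sum.inl δ + Finsupp.mapDomain Sum.inr β : (Fin n ⊕ Fin n) →₀ ℕ)) (Sum.inr i) = β i := by
    intro δ i
    rw [Finsupp.add_apply, Finsupp.mapDomain_apply Sum.inr_injective,
      Finsupp.mapDomain_notin_range _ _ (by simp), zero_add]
  have hCf : ∀ δ : Fin n →₀ ℕ,
      Cf (Sum.elim γ κ) (Finsupp.mapDomain Sum.inl δ + Finsupp.mapDomain Sum.inr β)
        = Cf γ δ * Cf κ β := by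
    intro δ
    simp only [Cf]
    rw [Fintype.prod_sum_type, Nat.cast_mul]
    simp only [Sum.elim_inl, Sum.elim_inr, happ1, happ2]
  have hPe : ∀ δ : Fin n →₀ ℕ,
      rename (reindexPolar γ κ)
        (Pe (Sum.elim γ κ) (Finsupp.mapDomain Sum.inl δ + Finsupp.mapDomain Sum.inr β))
        = rename Sum.inl (Pe γ δ) * Wp γ κ β := by
    intro δ
    rw [Pe, Fintype.prod_sum_type, map_mul, map_prod, map_prod, Pe, map_prod, Wp]
    congr 1
    · refine Finset.prod_congr rfl fun i _ => ?_
      rw [happ1 δ i, rename_rename, rename_rename]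
      rfl
    · refine Finset.prod_congr rfl fun i _ => ?_
      rw [happ2 δ i, rename_rename]
      rfl
  conv_lhs => rw [← MvPolynomial.support_sum_monomial_coeff f]
  rw [map_sum, Finset.sum_mul]
  simp only [rename_monomial, MvPolynomial.monomial_mul, mul_one]
  rw [polarization_sum, map_sum]
  rw [polarization_eq_sum γ f (A := f.support) subset_rfl, map_sum, Finset.sum_mul,
    Finset.smul_sum]
  refine Finset.sum_congr rfl fun δ _ => ?_
  rw [polarization_monomial, map_smul, hCf δ, hPe δ, map_smul, smul_mul_assoc, smul_smul]
  congr 1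
  rw [mul_inv]
  ring

lemma lemB (κ γ : Fin n → ℕ)
    (T : MvPolynomial (Fin n) ℂ →ₗ[ℂ] MvPolynomial (Fin n) ℂ) :
    rename (reindexPolar γ κ) (polarization (Sum.elim γ κ) (algSymbol κ T)) =
    ∑ α ∈ Finset.Iic (Finsupp.equivFunOnFinite.symm κ),
      rename Sum.inl (polarization γ (T (monomial α 1))) *
        Wp γ κ (Finsupp.equivFunOnFinite.symm κ - α) := by
  classical
  rw [algSymbol, polarization_sum, map_sum]
  refine Finset.sum_congr rfl fun α hα => ?_
  have hle : ∀ i, α i ≤ κ i := by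
    intro i
    have h := Finsupp.le_def.mp (Finset.mem_Iic.mp hα) i
    simpa using h
  have hCs : Cf κ (Finsupp.equivFunOnFinite.symm κ - α) = Cf κ α := by
    simp only [Cf]
    congr 1
    refine Finset.prod_congr rfl fun i _ => ?_
    have : (Finsupp.equivFunOnFinite.symm κ - α) i = κ i - α i := by
      rw [Finsupp.tsub_apply]; simp
    rw [this, Nat.choose_symm (hle i)]
  have hne : Cf κ α ≠ 0 := by
    simp only [Cf]
    exact Nat.cast_ne_zero.mpr (Finset.prod_ne_zero_iff.mpr
      fun i _ => (Nat.choose_pos (hle i)).ne')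
  rw [MvPolynomial.C_mul', polarization_smul, map_smul, rename_polarization_mul, hCs,
    smul_smul]
  rw [show ((∏ i, (κ i).choose (α i) : ℕ) : ℂ) = Cf κ α from rfl,
    mul_inv_cancel₀ hne, one_smul]


lemma lemA (κ γ : Fin n → ℕ)
    (T : MvPolynomial (Fin n) ℂ →ₗ[ℂ] MvPolynomial (Fin n) ℂ) :
    (∑ S : Finset ((i : Fin n) × Fin (κ i)),
        rename Sum.inl (polarization γ (T (rename Sigma.fst (∏ p ∈ S, X p)))) *
          ∏ p ∈ Sᶜ, X (Sum.inr p)) =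
    ∑ α ∈ Finset.Iic (Finsupp.equivFunOnFinite.symm κ),
      rename Sum.inl (polarization γ (T (monomial α 1))) *
        Wp γ κ (Finsupp.equivFunOnFinite.symm κ - α) := by
  classical
  have hbij : Function.Bijective
      (fun F : ∀ i, Finset (Fin (κ i)) => Finset.univ.sigma F) := by
    constructor
    · intro F G h
      funext i; ext j
      have := Finset.ext_iff.mp h ⟨i, j⟩
      simpa [Finset.mem_sigma] using this
    · intro S
      refine ⟨fun i => Finset.univ.filter fun j =>
        (⟨i, j⟩ : (i : Fin n) × Fin (κ i)) ∈ S, ?_⟩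
      ext ⟨i, j⟩; simp [Finset.mem_sigma]
  rw [← hbij.sum_comp (fun S => rename Sum.inl
      (polarization γ (T (rename Sigma.fst (∏ p ∈ S, X p)))) * ∏ p ∈ Sᶜ, X (Sum.inr p))]
  have hterm : ∀ F : ∀ i, Finset (Fin (κ i)),
      (rename Sum.inl (polarization γ
          (T (rename Sigma.fst (∏ p ∈ Finset.univ.sigma F, X p)))) *
        ∏ p ∈ (Finset.univ.sigma F)ᶜ, X (Sum.inr p))
      = rename Sum.inl (polarization γ
          (T (monomial (∑ i, Finsupp.single i ((F i).card)) 1))) *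
        ∏ i, ∏ j ∈ (F i)ᶜ, X (Sum.inr (⟨i, j⟩ : (i : Fin n) × Fin (κ i))) := by
    intro F
    have h1 : rename Sigma.fst (∏ p ∈ Finset.univ.sigma F, X p)
        = monomial (∑ i, Finsupp.single i ((F i).card)) (1 : ℂ) := by
      rw [map_prod]
      simp only [rename_X]
      rw [Finset.prod_sigma]
      have hX : ∀ i : Fin n, (∏ j ∈ F i, (X i : MvPolynomial (Fin n) ℂ))
          = monomial (Finsupp.single i ((F i).card)) 1 := by
        intro i; rw [Finset.prod_const, X_pow_eq_monomial]
      simp only [hX]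
      rw [monomial_sum_one]
    have h2 : (Finset.univ.sigma F)ᶜ
        = Finset.univ.sigma (fun i => (F i)ᶜ) := by
      ext ⟨i, j⟩; simp [Finset.mem_sigma]
    rw [h1, h2, Finset.prod_sigma]
  rw [Finset.sum_congr rfl fun F _ => hterm F]
  have hmaps : ∀ F : ∀ i, Finset (Fin (κ i)), F ∈ Finset.univ →
      Finsupp.equivFunOnFinite.symm (fun i => (F i).card)
        ∈ Finset.Iic (Finsupp.equivFunOnFinite.symm κ) := by
    intro F _
    refine Finset.mem_Iic.mpr (Finsupp.le_def.mpr fun i => ?_)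
    simpa using (Finset.card_le_univ (F i)).trans_eq (by simp)
  rw [← Finset.sum_fiberwise_of_maps_to hmaps]
  refine Finset.sum_congr rfl fun α hα => ?_
  have hle : ∀ i, α i ≤ κ i := by
    intro i
    have h := Finsupp.le_def.mp (Finset.mem_Iic.mp hα) i
    simpa using h
  have hcard : ∀ F : ∀ i, Finset (Fin (κ i)),
      Finsupp.equivFunOnFinite.symm (fun i => (F i).card) = α ↔
        ∀ i, (F i).card = α i := by
    intro F
    rw [Equiv.symm_apply_eq]
    exact funext_iff
  have hrw : ∀ F ∈ Finset.univ.filter (fun F : ∀ i, Finset (Fin (κ i)) =>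
      Finsupp.equivFunOnFinite.symm (fun i => (F i).card) = α),
      (rename Sum.inl (polarization γ
          (T (monomial (∑ i, Finsupp.single i ((F i).card)) 1))) *
        ∏ i, ∏ j ∈ (F i)ᶜ, X (Sum.inr (⟨i, j⟩ : (i : Fin n) × Fin (κ i))))
      = rename Sum.inl (polarization γ (T (monomial α 1))) *
        ∏ i, ∏ j ∈ (F i)ᶜ, X (Sum.inr (⟨i, j⟩ : (i : Fin n) × Fin (κ i))) := by
    intro F hF
    have hc := (hcard F).mp (Finset.mem_filter.mp hF).2
    have : (∑ i, Finsupp.single i ((F i).card)) = α := by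
      simp only [hc]
      exact Finsupp.univ_sum_single α
    rw [this]
  rw [Finset.sum_congr rfl hrw, ← Finset.mul_sum]
  congr 1
  have hset : Finset.univ.filter (fun F : ∀ i, Finset (Fin (κ i)) =>
        Finsupp.equivFunOnFinite.symm (fun i => (F i).card) = α)
      = Fintype.piFinset (fun i => Finset.univ.powersetCard (α i)) := by
    ext F
    simp only [Finset.mem_filter, Finset.mem_univ, true_and,
      Fintype.mem_piFinset, Finset.mem_powersetCard_univ]
    exact hcard F
  rw [hset]
  refine (Finset.prod_univ_sum (fun i => Finset.univ.powersetCard (α i))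
    (fun i A => ∏ j ∈ Aᶜ, (X (Sum.inr (⟨i, j⟩ : (i : Fin n) × Fin (κ i))) :
      MvPolynomial (((i : Fin n) × Fin (γ i)) ⊕ ((i : Fin n) × Fin (κ i))) ℂ))).symm.trans ?_
  rw [Wp]
  refine Finset.prod_congr rfl fun i _ => ?_
  have h' : (Finsupp.equivFunOnFinite.symm κ - α) i = κ i - α i := by
    rw [Finsupp.tsub_apply]; simp
  rw [h', esymm, map_sum]
  refine (Finset.sum_nbij' (i := fun A => Aᶜ) (j := fun B => Bᶜ) ?_ ?_ ?_ ?_ ?_).symm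
  · intro A hA
    rw [Finset.mem_powersetCard_univ] at hA ⊢
    rw [Finset.card_compl, Fintype.card_fin, hA, Nat.sub_sub_self (hle i)]
  · intro B hB
    rw [Finset.mem_powersetCard_univ] at hB ⊢
    rw [Finset.card_compl, Fintype.card_fin, hB]
  · intro A _; exact compl_compl A
  · intro B _; exact compl_compl B
  · intro A hA
    rw [map_prod]
    simp only [rename_X, compl_compl]

end PolarProofAux

/-- The symbol of the polarization of `T` is the polarization of the symbol of
`T`: `G_{Π(T)} = Π↑_{γ⊕κ}(G_T)`.  Here `Π(T) = Π↑_γ ∘ T ∘ Π↓_κ` (the projection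
`Π↓_κ` substitutes `z_{ij} ↦ zᵢ`, i.e. renames along `Sigma.fst`), and the
symbol of `Π(T)` is `Π(T)[∏ᵢ∏ⱼ (z_{ij} + w_{ij})] = ∑_S Π(T)(z^S) w^{Sᶜ}`. -/
theorem symbol_of_polarization_eq_polarization_of_symbol (n : ℕ)
    (κ γ : Fin n → ℕ)
    (T : MvPolynomial (Fin n) ℂ →ₗ[ℂ] MvPolynomial (Fin n) ℂ)
    (hT : ∀ f : MvPolynomial (Fin n) ℂ,
      (∀ i, f.degreeOf i ≤ κ i) → ∀ i, (T f).degreeOf i ≤ γ i) :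
    (∑ S : Finset ((i : Fin n) × Fin (κ i)),
        rename Sum.inl (polarization γ (T (rename Sigma.fst (∏ p ∈ S, X p)))) *
          ∏ p ∈ Sᶜ, X (Sum.inr p)) =
      rename (reindexPolar γ κ) (polarization (Sum.elim γ κ) (algSymbol κ T)) := by
  rw [PolarProofAux.lemA κ γ T, PolarProofAux.lemB κ γ T]
end

section
/- Let κ ∈ ℕⁿ, f ∈ ℂ_κ[z₁,…,zₙ], and W = (W₁,…,Wₙ) ∈ ℂⁿ with Im(Wᵢ) > 0 for all i. Then there exists ε₀ > 0 such that for all 0 < ε < ε₀ the polynomial (z+W)^κ + ε·f(z) is stable, where (z+W)^κ = (z₁+W₁)^{κ₁}⋯(zₙ+Wₙ)^{κₙ}. -/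
/-!
For `Im w > 0` and `Im z ≥ 0` we have `‖z + w‖ ≥ Im w`, hence `1 + ‖z‖ ≤ c_w ‖z + w‖`.
Since `f` has degree at most `κᵢ` in `zᵢ`, this gives `‖f(z)‖ ≤ B ‖(z + W)^κ‖` on the
upper half-plane. So once `ε B < 1`, the term `ε f` is too small to cancel `(z + W)^κ`,
which does not vanish there.
-/

open MvPolynomial

theorem MvPolynomial.norm_eval_le_of_degreeOf_le {σ R : Type*} [Fintype σ] [NormedCommRing R]
    [NormOneClass R] {f : MvPolynomial σ R} {κ : σ → ℕ} (hf : ∀ i, f.degreeOf i ≤ κ i)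
    (z : σ → R) :
    ‖eval z f‖ ≤ (∑ α ∈ f.support, ‖f.coeff α‖) * ∏ i, (1 + ‖z i‖) ^ κ i := by
  rw [eval_eq', Finset.sum_mul]
  refine (norm_sum_le _ _).trans (Finset.sum_le_sum fun α hα => ?_)
  refine (norm_mul_le _ _).trans (mul_le_mul_of_nonneg_left ?_ (norm_nonneg _))
  refine (Finset.norm_prod_le _ _).trans (Finset.prod_le_prod (fun _ _ => norm_nonneg _) ?_)
  intro i _
  calc ‖z i ^ α i‖ ≤ ‖z i‖ ^ α i := norm_pow_le _ _
    _ ≤ (1 + ‖z i‖) ^ α i := by gcongr; linarith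
    _ ≤ (1 + ‖z i‖) ^ κ i :=
      pow_le_pow_right₀ (by simp) ((monomial_le_degreeOf i hα).trans (hf i))

theorem Complex.one_add_norm_le_mul_norm_add {z w : ℂ} (hz : 0 ≤ z.im) (hw : 0 < w.im) :
    1 + ‖z‖ ≤ (1 + (1 + ‖w‖) / w.im) * ‖z + w‖ := by
  have hwz : w.im ≤ ‖z + w‖ := by
    simpa using (Complex.im_le_norm (z + w)).trans' (by simpa using hz)
  have hz_le : ‖z‖ ≤ ‖z + w‖ + ‖w‖ := by simpa using norm_le_norm_add_norm_sub' z (z + w)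
  have h1 : (1 + ‖w‖) ≤ (1 + ‖w‖) / w.im * ‖z + w‖ := by
    rw [div_mul_eq_mul_div, le_div_iff₀ hw]; gcongr
  linarith

theorem MvPolynomial.norm_eval_le_mul_norm_prod_add_pow {σ : Type*} [Fintype σ]
    {f : MvPolynomial σ ℂ} {κ : σ → ℕ} (hf : ∀ i, f.degreeOf i ≤ κ i) {W : σ → ℂ}
    (hW : ∀ i, 0 < (W i).im) :
    ∃ B : ℝ, 0 ≤ B ∧ ∀ z : σ → ℂ, (∀ i, 0 ≤ (z i).im) →
      ‖eval z f‖ ≤ B * ‖∏ i, (z i + W i) ^ κ i‖ := by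
  set c : σ → ℝ := fun i => 1 + (1 + ‖W i‖) / (W i).im
  have hc : ∀ i, 0 ≤ c i := fun i => by have := hW i; positivity
  refine ⟨(∑ α ∈ f.support, ‖f.coeff α‖) * ∏ i, c i ^ κ i,
    mul_nonneg (Finset.sum_nonneg fun _ _ => norm_nonneg _)
      (Finset.prod_nonneg fun i _ => pow_nonneg (hc i) _), fun z hz => ?_⟩
  calc ‖eval z f‖ ≤ (∑ α ∈ f.support, ‖f.coeff α‖) * ∏ i, (1 + ‖z i‖) ^ κ i :=
        norm_eval_le_of_degreeOf_le hf z
    _ ≤ (∑ α ∈ f.support, ‖f.coeff α‖) * ∏ i, (c i * ‖z i + W i‖) ^ κ i := by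
        gcongr with i
        exact Complex.one_add_norm_le_mul_norm_add (hz i) (hW i)
    _ = (∑ α ∈ f.support, ‖f.coeff α‖) * (∏ i, c i ^ κ i) * ‖∏ i, (z i + W i) ^ κ i‖ := by
        simp only [norm_prod, norm_pow, mul_pow, Finset.prod_mul_distrib, mul_assoc]

/-- Let `f` have degree at most `κᵢ` in the variable `zᵢ` and let `W ∈ ℂⁿ` have
all coordinates in the open upper half-plane.  Then for all sufficiently small
`ε > 0` the polynomial `(z+W)^κ + ε·f(z)` is stable. -/
theorem perturbation_of_stable (n : ℕ) (κ : Fin n → ℕ)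
    (f : MvPolynomial (Fin n) ℂ) (hf : ∀ i, f.degreeOf i ≤ κ i)
    (W : Fin n → ℂ) (hW : ∀ i, 0 < (W i).im) :
    ∃ ε₀ : ℝ, 0 < ε₀ ∧ ∀ ε : ℝ, 0 < ε → ε < ε₀ →
      IsStable ((∏ i, (X i + C (W i)) ^ κ i) + (ε : ℂ) • f) := by
  obtain ⟨B, hB, hfB⟩ := norm_eval_le_mul_norm_prod_add_pow hf hW
  refine ⟨(B + 1)⁻¹, by positivity, fun ε hε hεB z hz => ?_⟩
  set P := ∏ i, (z i + W i) ^ κ i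
  have hP : 0 < ‖P‖ := norm_pos_iff.2 <| Finset.prod_ne_zero_iff.2 fun i _ =>
    pow_ne_zero _ fun h => by
      have := congrArg Complex.im h
      simp only [Complex.add_im, Complex.zero_im] at this
      linarith [hz i, hW i]
  have hεB' : ε * (B + 1) < 1 := by rwa [← one_div, lt_div_iff₀ (by positivity)] at hεB
  have hsmall : ‖(ε : ℂ) * eval z f‖ < ‖P‖ :=
    calc ‖(ε : ℂ) * eval z f‖ = ε * ‖eval z f‖ := by
          rw [norm_mul, Complex.norm_real, Real.norm_of_nonneg hε.le]
      _ ≤ ε * (B * ‖P‖) := by gcongr; exact hfB z fun i => (hz i).le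
      _ < ‖P‖ := by nlinarith
  rw [map_add, smul_eval]
  simp only [map_prod, map_pow, map_add, eval_X, eval_C]
  intro h
  rw [eq_neg_of_add_eq_zero_right h, norm_neg] at hsmall
  exact lt_irrefl _ hsmall
end

section
/- Let V be a linear subspace of 𝕂[z₁,…,zₙ], where 𝕂 = ℝ or ℂ. (i) If 𝕂 = ℝ and every non-zero element of V is real stable, then dim_ℝ V ≤ 2. (ii) If 𝕂 = ℂ and every non-zero element of V is stable, then dim_ℂ V ≤ 1. -/
open MvPolynomial

/-- (i) A real subspace of `ℝ[z₁,…,zₙ]` all of whose non-zero elements are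
real stable has dimension at most `2`.  (ii) A complex subspace of
`ℂ[z₁,…,zₙ]` all of whose non-zero elements are stable has dimension at
most `1`. -/
theorem dimension_of_stable_subspaces (n : ℕ) :
    (∀ V : Submodule ℝ (MvPolynomial (Fin n) ℝ),
        (∀ f ∈ V, f ≠ 0 → IsRealStable f) → Module.rank ℝ V ≤ 2) ∧
    (∀ V : Submodule ℂ (MvPolynomial (Fin n) ℂ),
        (∀ f ∈ V, f ≠ 0 → IsStable f) → Module.rank ℂ V ≤ 1) := by
  have hzim : ∀ i : Fin n, (0 : ℝ) < ((fun _ : Fin n => Complex.I) i).im := by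
    intro i; simp
  constructor
  · intro V hV
    let φ : V →ₗ[ℝ] ℂ :=
      ((MvPolynomial.aeval (fun _ : Fin n => Complex.I)).toLinearMap).comp V.subtype
    have hinj : Function.Injective φ := by
      intro a b hab
      have h : (MvPolynomial.aeval (fun _ : Fin n => Complex.I)) ((a : MvPolynomial (Fin n) ℝ) - (b : MvPolynomial (Fin n) ℝ)) = 0 := by
        rw [map_sub, sub_eq_zero]; exact hab
      have : (a : MvPolynomial (Fin n) ℝ) - b = 0 := by
        by_contra hne
        exact hV _ (sub_mem a.2 b.2) hne _ hzim h
      exact Subtype.ext (sub_eq_zero.mp this)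
    calc Module.rank ℝ V ≤ Module.rank ℝ ℂ := LinearMap.rank_le_of_injective φ hinj
      _ = 2 := Complex.rank_real_complex
  · intro V hV
    let φ : V →ₗ[ℂ] ℂ :=
      ((MvPolynomial.aeval (fun _ : Fin n => Complex.I)).toLinearMap).comp V.subtype
    have hinj : Function.Injective φ := by
      intro a b hab
      have h : (MvPolynomial.eval (fun _ : Fin n => Complex.I)) ((a : MvPolynomial (Fin n) ℂ) - (b : MvPolynomial (Fin n) ℂ)) = 0 := by
        rw [← MvPolynomial.coe_aeval_eq_eval, RingHom.coe_coe, map_sub, sub_eq_zero]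
        exact hab
      have : (a : MvPolynomial (Fin n) ℂ) - b = 0 := by
        by_contra hne
        exact hV _ (sub_mem a.2 b.2) hne _ hzim h
      exact Subtype.ext (sub_eq_zero.mp this)
    calc Module.rank ℂ V ≤ Module.rank ℂ ℂ := LinearMap.rank_le_of_injective φ hinj
      _ = 1 := Module.rank_self ℂ
end

section
/- (Szász's lemma) Suppose the univariate polynomial f(z) = 1 + Σ_{i=1}^k aᵢ z^i = Π_{j=1}^k (1 + ξⱼ z) is stable. Then Σ_{j=1}^k |ξⱼ|² ≤ 3|a₁|² + 2|a₂|. -/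
/-!
A zero of `1 + ξ z` lies at `-1/ξ`, so stability puts every `ξⱼ` in the closed lower half-plane.
Write `‖ξ‖² = Re ξ² + 2 (Im ξ)²`. Since the `Im ξⱼ` share a sign, `∑ (Im ξⱼ)² ≤ (Im a₁)²`, and
`∑ ξⱼ² = a₁² - 2 a₂`, so `∑ ‖ξⱼ‖² ≤ Re (a₁²) + 2 (Im a₁)² + 2 ‖a₂‖ = ‖a₁‖² + 2 ‖a₂‖`.
-/

open Polynomial Finset

section ProdOneAddCMulX

variable {R ι : Type*} [CommRing R]

lemma coeff_one_add_C_mul_X_mul_succ (a : R) (p : R[X]) (n : ℕ) :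
    ((1 + C a * X) * p).coeff (n + 1) = p.coeff (n + 1) + a * p.coeff n := by
  simp [add_mul, mul_assoc, coeff_X_mul]

lemma coeff_zero_prod_one_add_C_mul_X (s : Finset ι) (a : ι → R) :
    (∏ j ∈ s, (1 + C (a j) * X)).coeff 0 = 1 := by
  simp [coeff_zero_eq_eval_zero, eval_prod]

lemma coeff_one_prod_one_add_C_mul_X [DecidableEq ι] (s : Finset ι) (a : ι → R) :
    (∏ j ∈ s, (1 + C (a j) * X)).coeff 1 = ∑ j ∈ s, a j := by
  induction s using Finset.induction with
  | empty => simp [coeff_one]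
  | insert i s hi ih =>
    rw [prod_insert hi, sum_insert hi, coeff_one_add_C_mul_X_mul_succ, ih,
      coeff_zero_prod_one_add_C_mul_X, mul_one, add_comm]

lemma two_mul_coeff_two_prod_one_add_C_mul_X [DecidableEq ι] (s : Finset ι) (a : ι → R) :
    2 * (∏ j ∈ s, (1 + C (a j) * X)).coeff 2 = (∑ j ∈ s, a j) ^ 2 - ∑ j ∈ s, a j ^ 2 := by
  induction s using Finset.induction with
  | empty => simp [coeff_one]
  | insert i s hi ih =>
    rw [prod_insert hi, sum_insert hi, sum_insert hi, coeff_one_add_C_mul_X_mul_succ,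
      coeff_one_prod_one_add_C_mul_X]
    linear_combination ih

end ProdOneAddCMulX

lemma Polynomial.im_nonpos_of_stable_of_eq_mul {a : ℂ} {p q : ℂ[X]} (hp : p = (1 + C a * X) * q)
    (hstable : ∀ ζ : ℂ, 0 < ζ.im → p.eval ζ ≠ 0) : a.im ≤ 0 := by
  by_contra! ha
  have ha0 : a ≠ 0 := by rintro rfl; simp at ha
  refine hstable (-a⁻¹) ?_ ?_
  · rw [Complex.neg_im, Complex.inv_im, neg_div, neg_neg]
    exact div_pos ha (Complex.normSq_pos.mpr ha0)
  · simp [hp, mul_inv_cancel₀ ha0]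

lemma Complex.sq_norm_eq_re_sq_add_two_mul_im_sq (z : ℂ) :
    ‖z‖ ^ 2 = (z ^ 2).re + 2 * z.im ^ 2 := by
  rw [Complex.sq_norm, Complex.normSq_apply, sq, Complex.mul_re]
  ring

lemma sum_im_sq_le_im_sum_sq {ι : Type*} (s : Finset ι) (z : ι → ℂ)
    (hz : ∀ j ∈ s, (z j).im ≤ 0) : ∑ j ∈ s, (z j).im ^ 2 ≤ (∑ j ∈ s, z j).im ^ 2 := by
  have h := sum_sq_le_sq_sum_of_nonneg (fun j hj ↦ neg_nonneg.mpr (hz j hj))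
  simpa only [neg_sq, sum_neg_distrib, Complex.im_sum] using h

lemma sum_sq_norm_le_of_im_nonpos {ι : Type*} (s : Finset ι) (z : ι → ℂ)
    (hz : ∀ j ∈ s, (z j).im ≤ 0) :
    ∑ j ∈ s, ‖z j‖ ^ 2 ≤ ‖∑ j ∈ s, z j‖ ^ 2 + ‖(∑ j ∈ s, z j) ^ 2 - ∑ j ∈ s, z j ^ 2‖ := by
  set S := ∑ j ∈ s, z j
  have hsum : ∑ j ∈ s, ‖z j‖ ^ 2 = (S ^ 2).re - (S ^ 2 - ∑ j ∈ s, z j ^ 2).re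
      + 2 * ∑ j ∈ s, (z j).im ^ 2 := by
    simp only [Complex.sq_norm_eq_re_sq_add_two_mul_im_sq, sum_add_distrib, mul_sum,
      Complex.sub_re, Complex.re_sum, sub_sub_cancel]
  have hS : ‖S‖ ^ 2 = (S ^ 2).re + 2 * S.im ^ 2 := Complex.sq_norm_eq_re_sq_add_two_mul_im_sq S
  have hdefect := neg_le_of_abs_le (Complex.abs_re_le_norm (S ^ 2 - ∑ j ∈ s, z j ^ 2))
  linarith [sum_im_sq_le_im_sum_sq s z hz]

/-- Szász's lemma: if the univariate polynomial
`f(z) = 1 + ∑_{i=1}^k aᵢ zⁱ = ∏_{j=1}^k (1 + ξⱼ z)` is stable (non-vanishing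
on the open upper half-plane), then `∑ⱼ |ξⱼ|² ≤ 3|a₁|² + 2|a₂|`. -/
theorem szasz_lemma (k : ℕ) (ξ : Fin k → ℂ) (f : Polynomial ℂ)
    (hf : f = ∏ j, (1 + Polynomial.C (ξ j) * Polynomial.X))
    (hstable : ∀ ζ : ℂ, 0 < ζ.im → f.eval ζ ≠ 0) :
    ∑ j, ‖ξ j‖ ^ 2 ≤
      3 * ‖f.coeff 1‖ ^ 2 + 2 * ‖f.coeff 2‖ := by
  have him : ∀ j ∈ univ, (ξ j).im ≤ 0 := fun j hj ↦
    im_nonpos_of_stable_of_eq_mul (by rw [hf, ← mul_prod_erase _ _ hj]) hstable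
  have hcoeff₂ : (∑ j, ξ j) ^ 2 - ∑ j, ξ j ^ 2 = 2 * f.coeff 2 := by
    rw [hf, two_mul_coeff_two_prod_one_add_C_mul_X]
  calc ∑ j, ‖ξ j‖ ^ 2 ≤ ‖∑ j, ξ j‖ ^ 2 + ‖(∑ j, ξ j) ^ 2 - ∑ j, ξ j ^ 2‖ :=
        sum_sq_norm_le_of_im_nonpos univ ξ him
    _ = ‖f.coeff 1‖ ^ 2 + 2 * ‖f.coeff 2‖ := by
        rw [hcoeff₂, norm_mul, Complex.norm_two, hf, coeff_one_prod_one_add_C_mul_X]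
    _ ≤ 3 * ‖f.coeff 1‖ ^ 2 + 2 * ‖f.coeff 2‖ := by linarith [sq_nonneg ‖f.coeff 1‖]
end

section
/- (Multivariate Hurwitz theorem) Let D be a domain (open connected set) in ℂⁿ and let {f_k}_{k=1}^∞ be a sequence of analytic functions on D, each non-vanishing on D, that converges to a function f uniformly on compact subsets of D. Then f is either non-vanishing on D or identically zero on D. -/
/-!
A zero of the limit `f` propagates along every complex line through it. On such a line the
restricted functions are holomorphic and zero-free, so by the minimum modulus principle they are
bounded below at the centre of any disc by their minimum on its boundary circle; if the limit had
an isolated zero, this lower bound would survive in the limit and contradict the zero. Hence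
zeros of `f` are never isolated on lines, so the zero set of `f` in `D` is open; its complement
in `D` is open by continuity, and connectedness of `D` concludes.
-/

open Filter Metric Set Topology

section Topology

variable {X Y : Type*} [TopologicalSpace X] [TopologicalSpace Y] [T1Space Y]

theorem IsPreconnected.forall_ne_or_forall_eq_of_eventually_eq {D : Set X} (hD : IsOpen D)
    (hDc : IsPreconnected D) {f : X → Y} (hf : ContinuousOn f D) {a : Y}
    (hloc : ∀ z ∈ D, f z = a → ∀ᶠ w in 𝓝 z, f w = a) :
    (∀ z ∈ D, f z ≠ a) ∨ ∀ z ∈ D, f z = a := by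
  have hdisj : Disjoint {z | ∀ᶠ w in 𝓝 z, f w = a} (D ∩ f ⁻¹' {a}ᶜ) :=
    disjoint_left.2 fun z hz hne => hne.2 hz.self_of_nhds
  have hcover : D ⊆ {z | ∀ᶠ w in 𝓝 z, f w = a} ∪ (D ∩ f ⁻¹' {a}ᶜ) := fun z hz =>
    (em (f z = a)).imp (hloc z hz) fun hne => ⟨hz, hne⟩
  rcases hDc.subset_or_subset isOpen_setOfPred_eventually_nhds
    (hf.isOpen_inter_preimage hD isOpen_compl_singleton) hdisj hcover with h | h
  · exact .inr fun z hz => (h hz).self_of_nhds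
  · exact .inl fun z hz => (h hz).2

end Topology

namespace Complex

theorem le_norm_of_forall_mem_frontier_le_norm {E : Type*} [NormedAddCommGroup E]
    [NormedSpace ℂ E] [Nontrivial E] {f : E → ℂ} {U : Set E} (hU : Bornology.IsBounded U)
    (hd : DiffContOnCl ℂ f U) (hf : ∀ z ∈ closure U, f z ≠ 0) {C : ℝ} (hC : 0 < C)
    (hle : ∀ z ∈ frontier U, C ≤ ‖f z‖) {z : E} (hz : z ∈ closure U) : C ≤ ‖f z‖ := by
  have hinv : ‖f⁻¹ z‖ ≤ C⁻¹ := norm_le_of_forall_mem_frontier_norm_le hU (hd.inv hf)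
    (fun w hw => by simpa only [Pi.inv_apply, norm_inv] using inv_anti₀ hC (hle w hw)) hz
  rw [Pi.inv_apply, norm_inv] at hinv
  exact (inv_le_inv₀ (norm_pos_iff.2 (hf z hz)) hC).1 hinv

theorem ne_zero_of_tendstoUniformlyOn_closedBall {G : ℕ → ℂ → ℂ} {g : ℂ → ℂ} {c : ℂ} {r : ℝ}
    (hr : 0 < r) (hG : ∀ k, DifferentiableOn ℂ (G k) (closedBall c r))
    (hG0 : ∀ k, ∀ z ∈ closedBall c r, G k z ≠ 0)
    (hlim : TendstoUniformlyOn G g atTop (closedBall c r))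
    (hg : ∀ z ∈ sphere c r, g z ≠ 0) : g c ≠ 0 := by
  have hgc : ContinuousOn g (sphere c r) :=
    (hlim.continuousOn (.of_forall fun k => (hG k).continuousOn)).mono sphere_subset_closedBall
  obtain ⟨m, hm, hmg⟩ : ∃ m > 0, ∀ z ∈ sphere c r, m ≤ ‖g z‖ := by
    obtain ⟨z₀, hz₀, hmin⟩ := (isCompact_sphere c r).exists_isMinOn
      (NormedSpace.sphere_nonempty.2 hr.le) hgc.norm
    exact ⟨‖g z₀‖, norm_pos_iff.2 (hg z₀ hz₀), fun z hz => hmin hz⟩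
  -- `G k` is `m / 2`-close to `g`, so it is at least `m / 2` in norm on the circle
  obtain ⟨k, hk⟩ := (Metric.tendstoUniformlyOn_iff.1 hlim (m / 2) (half_pos hm)).exists
  have hGk : m / 2 ≤ ‖G k c‖ := by
    refine le_norm_of_forall_mem_frontier_le_norm isBounded_ball
      ((hG k).diffContOnCl_ball le_rfl) ?_ (half_pos hm) ?_ (subset_closure (mem_ball_self hr))
    · rw [closure_ball c hr.ne']; exact hG0 k
    · rw [frontier_ball c hr.ne']
      intro z hz
      have := hk z (sphere_subset_closedBall hz)
      rw [dist_eq_norm] at this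
      linarith [hmg z hz, norm_sub_norm_le (g z) (G k z)]
  intro hgc0
  have := hk c (mem_closedBall_self hr.le)
  rw [hgc0, dist_zero_left] at this
  linarith

theorem eventually_eq_zero_of_tendstoLocallyUniformlyOn {U : Set ℂ} (hU : IsOpen U)
    {G : ℕ → ℂ → ℂ} {g : ℂ → ℂ} (hG : ∀ k, DifferentiableOn ℂ (G k) U)
    (hG0 : ∀ k, ∀ z ∈ U, G k z ≠ 0) (hlim : TendstoLocallyUniformlyOn G g atTop U)
    {z₀ : ℂ} (hz₀ : z₀ ∈ U) (hg : g z₀ = 0) : ∀ᶠ z in 𝓝 z₀, g z = 0 := by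
  have hga : AnalyticAt ℂ g z₀ :=
    (hlim.differentiableOn (.of_forall hG) hU).analyticOnNhd hU z₀ hz₀
  refine hga.eventually_eq_zero_or_eventually_ne_zero.resolve_right fun hisol => ?_
  obtain ⟨r, hr, hrU⟩ : ∃ r > 0, closedBall z₀ r ⊆ U ∩ {z | z ≠ z₀ → g z ≠ 0} :=
    nhds_basis_closedBall.mem_iff.1
      (inter_mem (hU.mem_nhds hz₀) (eventually_nhdsWithin_iff.1 hisol))
  refine ne_zero_of_tendstoUniformlyOn_closedBall hr (fun k => (hG k).mono fun z hz => (hrU hz).1)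
    (fun k z hz => hG0 k z (hrU hz).1) ?_ (fun z hz => (hrU (sphere_subset_closedBall hz)).2
      (ne_of_mem_sphere hz hr.ne')) hg
  exact (tendstoLocallyUniformlyOn_iff_tendstoUniformlyOn_of_compact (isCompact_closedBall z₀ r)).1
    (hlim.mono fun z hz => (hrU hz).1)

end Complex

section Hurwitz

variable {E : Type*} [NormedAddCommGroup E] [NormedSpace ℂ E] {D : Set E} {F : ℕ → E → ℂ}
  {f : E → ℂ}

theorem eventually_eq_zero_of_tendstoLocallyUniformlyOn (hD : IsOpen D)
    (hF : ∀ k, DifferentiableOn ℂ (F k) D) (hF0 : ∀ k, ∀ z ∈ D, F k z ≠ 0)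
    (hlim : TendstoLocallyUniformlyOn F f atTop D) {z₀ : E} (hz₀ : z₀ ∈ D) (hf : f z₀ = 0) :
    ∀ᶠ z in 𝓝 z₀, f z = 0 := by
  obtain ⟨r, hr, hrD⟩ := Metric.isOpen_iff.1 hD z₀ hz₀
  filter_upwards [ball_mem_nhds z₀ hr] with w hw
  set φ : ℂ →ᵃ[ℂ] E := AffineMap.lineMap z₀ w
  set U : Set ℂ := φ ⁻¹' ball z₀ r
  have hUc : Convex ℝ U :=
    ((convex_ball z₀ r).translate_preimage_left z₀).linear_preimage
      ((LinearMap.toSpanSingleton ℂ E (w - z₀)).restrictScalars ℝ)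
  have hφ : Continuous φ := AffineMap.lineMap_continuous
  have hUo : IsOpen U := isOpen_ball.preimage hφ
  have hmaps : MapsTo φ U D := fun _ ht => hrD ht
  have hcont : ContinuousOn (f ∘ φ) U :=
    (hlim.continuousOn (.of_forall fun k => (hF k).continuousOn)).comp hφ.continuousOn hmaps
  have hloc : ∀ t ∈ U, (f ∘ φ) t = 0 → ∀ᶠ s in 𝓝 t, (f ∘ φ) s = 0 := fun t ht hft =>
    Complex.eventually_eq_zero_of_tendstoLocallyUniformlyOn hUo
      (fun k => (hF k).comp φ.differentiableOn hmaps) (fun k t ht => hF0 k _ (hmaps ht))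
      (hlim.comp φ hmaps hφ.continuousOn) ht hft
  rcases hUc.isPreconnected.forall_ne_or_forall_eq_of_eventually_eq hUo hcont hloc with
    hne | hzero
  · exact absurd (by simpa [φ] using hf) (hne 0 (by simp [U, φ, hr]))
  · simpa [φ] using hzero 1 (by simpa [U, φ] using hw)

theorem forall_ne_zero_or_forall_eq_zero_of_tendstoLocallyUniformlyOn (hD : IsOpen D)
    (hDc : IsPreconnected D) (hF : ∀ k, DifferentiableOn ℂ (F k) D)
    (hF0 : ∀ k, ∀ z ∈ D, F k z ≠ 0) (hlim : TendstoLocallyUniformlyOn F f atTop D) :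
    (∀ z ∈ D, f z ≠ 0) ∨ ∀ z ∈ D, f z = 0 :=
  hDc.forall_ne_or_forall_eq_of_eventually_eq hD
    (hlim.continuousOn (.of_forall fun k => (hF k).continuousOn))
    fun _ hz hfz => eventually_eq_zero_of_tendstoLocallyUniformlyOn hD hF hF0 hlim hz hfz

end Hurwitz

/-- Multivariate Hurwitz theorem: let `D` be a domain (open connected set) in
`ℂⁿ` and let `(F k)` be a sequence of analytic functions on `D`, each
non-vanishing on `D`, converging to `f` uniformly on compact subsets of `D`.
Then `f` is either non-vanishing on `D` or identically zero on `D`. -/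
theorem multivariate_hurwitz (n : ℕ) (D : Set (Fin n → ℂ))
    (hopen : IsOpen D) (hconn : IsConnected D)
    (F : ℕ → (Fin n → ℂ) → ℂ) (f : (Fin n → ℂ) → ℂ)
    (hhol : ∀ k, DifferentiableOn ℂ (F k) D)
    (hnv : ∀ k, ∀ z ∈ D, F k z ≠ 0)
    (hconv : ∀ K : Set (Fin n → ℂ), K ⊆ D → IsCompact K →
      TendstoUniformlyOn F f Filter.atTop K) :
    (∀ z ∈ D, f z ≠ 0) ∨ (∀ z ∈ D, f z = 0) :=
  forall_ne_zero_or_forall_eq_zero_of_tendstoLocallyUniformlyOn hopen hconn.isPreconnected hhol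
    hnv ((tendstoLocallyUniformlyOn_iff_forall_isCompact hopen).2 hconv)
end
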